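/- arXiv:2408.14807 — 9 statements merged into one kernel-verified Lean document; each statement's English description precedes it below -/
import Mathlib

section
/- Let G be a finite group with a central involution t, and let 𝔖 ⊆ G \ {1} be an inverse-closed union of conjugacy classes of G. For each irreducible complex character χ of G set θ_χ = (∑_{s∈𝔖} χ(s))/χ(1). Suppose (i) θ_χ ∈ ℤ for every irreducible character χ, and (ii) there exists a ∈ ℤ such that θ_χ ≡ a (mod 4) for every irreducible χ with χ(t) = χ(1), and θ_χ ≡ a+2 (mod 4) for every irreducible χ with χ(t) = −χ(1). Then for every x ∈ G there is a time τ ∈ ℝ at which perfect state transfer occurs in Cay(G,𝔖) from the vertex x to the vertex xt. -/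
open scoped Classical

/-- Perfect state transfer from `a` to `b` at time `τ` for the continuous-time quantum
walk with Hamiltonian given by the complex matrix `A`. -/
noncomputable def pst {V : Type*} [Fintype V] [DecidableEq V]
    (A : Matrix V V ℂ) (a b : V) (τ : ℝ) : Prop :=
  ∃ γ : ℂ, ‖γ‖ = 1 ∧
    (NormedSpace.exp ((-(τ : ℂ) * Complex.I) • A)).mulVec (Pi.single a 1 : V → ℂ) =
      γ • (Pi.single b 1 : V → ℂ)

/-- The adjacency matrix of the Cayley graph `Cay(G, S)`. -/
noncomputable def cayleyAdj {G : Type*} [Group G] (S : Set G) : Matrix G G ℂ :=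
  fun g h => if h * g⁻¹ ∈ S then 1 else 0

/-!
The group algebra `ℂ[G]` is semisimple, so every vector is a sum of vectors lying in simple
left ideals `W`. On such a `W`, which affords an irreducible character `χ`, the central
elements `z = ∑_{s ∈ S} s` and `t` act (Schur) by the scalars `θ_χ` and `χ(t)/χ(1) = ±1`,
while the adjacency matrix of `Cay(G, S)` acts on coefficient vectors as left multiplication
by `z`. The congruences say exactly that `exp(-iπθ_χ/2) = γ · χ(t)/χ(1)` with
`γ = exp(-iπa/2)` independent of `χ`; hence `exp(-iπA/2)` acts as `γ` times left
multiplication by `t`, which sends `e_x` to `e_{xt}`.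
-/

open CategoryTheory MonoidAlgebra
open scoped Matrix MonoidAlgebra

universe u

section MatrixExp

attribute [local instance] Matrix.linftyOpNormedAddCommGroup Matrix.linftyOpNormedRing
  Matrix.linftyOpNormedAlgebra

theorem Matrix.exp_mulVec_of_mulVec_eq_smul {𝕂 n : Type*} [RCLike 𝕂] [Fintype n] [DecidableEq n]
    {A : Matrix n n 𝕂} {v : n → 𝕂} {c : 𝕂} (h : A *ᵥ v = c • v) :
    NormedSpace.exp A *ᵥ v = NormedSpace.exp c • v := by
  have hpow (k : ℕ) : (A ^ k) *ᵥ v = c ^ k • v := by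
    induction k with
    | zero => simp
    | succ k ih => rw [pow_succ, ← Matrix.mulVec_mulVec, h, Matrix.mulVec_smul, ih, smul_smul,
        pow_succ, mul_comm]
  have hA := (NormedSpace.exp_series_hasSum_exp' (𝕂 := 𝕂) A).map
    (Matrix.mulVec.addMonoidHomLeft v) (continuous_id.matrix_mulVec continuous_const)
  have hc := (NormedSpace.exp_series_hasSum_exp' (𝕂 := 𝕂) c).smul_const v
  refine hA.unique ?_
  convert hc using 2 with k
  simp [Matrix.mulVec.addMonoidHomLeft, Matrix.smul_mulVec, hpow, smul_smul]

end MatrixExp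

theorem Complex.exp_neg_pi_div_two_mul_I_of_modEq {m a : ℤ} (j : ℕ)
    (h : m ≡ a + 2 * j [ZMOD 4]) :
    exp (-(↑(Real.pi / 2)) * I * m) = exp (-(↑(Real.pi / 2)) * I * a) * (-1) ^ j := by
  obtain ⟨k, hk⟩ := h.dvd
  have hm : (m : ℂ) = a + 2 * j - 4 * k := by
    rw [show m = a + 2 * j - 4 * k by omega]; push_cast; ring
  have harg : -(↑(Real.pi / 2)) * I * m
      = -(↑(Real.pi / 2)) * I * a + j * (-(Real.pi * I)) + k * (2 * Real.pi * I) := by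
    rw [hm]; push_cast; ring
  rw [harg, exp_add, exp_add, exp_int_mul_two_pi_mul_I, exp_nat_mul, exp_neg, exp_pi_mul_I]
  norm_num

theorem IsSimpleModule.exists_smul_eq_of_commute (k : Type*) {A V : Type*} [Field k] [Ring A]
    [Algebra k A] [AddCommGroup V] [Module k V] [Module A V] [IsScalarTower k A V]
    [IsSimpleModule A V] [FiniteDimensional k V] [IsAlgClosed k]
    {z : A} (hz : ∀ r : A, Commute z r) : ∃ c : k, ∀ x : V, z • x = c • x := by
  let f : Module.End A V :=
    { toFun := (z • ·)
      map_add' := smul_add z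
      map_smul' := fun r x => by simp only [smul_smul, (hz r).eq, RingHom.id_apply] }
  obtain ⟨c, hc⟩ := (IsSimpleModule.algebraMap_end_bijective_of_isAlgClosed k (A := A) (V := V)).2 f
  exact ⟨c, fun x => (LinearMap.congr_fun hc x).symm⟩

theorem FDRep.simple_of_isIrreducible {k G : Type*} [Field k] [Monoid G] (V : FDRep k G)
    [h : Representation.IsIrreducible V.ρ] : Simple V := by
  have : Representation.IsIrreducible ((forget₂ (FDRep k G) (Rep k G)).obj V).ρ := by
    rw [FDRep.forget₂_ρ]; exact h
  have := (simple_obj_iff Rep.toModuleMonoidAlgebra _).mp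
    (simple_of_isSimpleModule (R := k[G]) (M := ((forget₂ (FDRep k G) (Rep k G)).obj V).ρ.asModule))
  exact Functor.simple_of_simple_obj (forget₂ (FDRep k G) (Rep k G)) V

section OfModule

variable {k G : Type*} [Field k] [Group G] (M : Type*) [AddCommGroup M] [Module k M]
  [Module k[G] M] [IsScalarTower k k[G] M]

theorem Representation.asAlgebraHom_ofModule' (r : k[G]) :
    (Representation.ofModule' M).asAlgebraHom r = Algebra.lsmul k k M r := by
  simp [Representation.asAlgebraHom_def, Representation.ofModule']

theorem Representation.isIrreducible_ofModule' [IsSimpleModule k[G] M] :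
    Representation.IsIrreducible (Representation.ofModule' (k := k) (G := G) M) := by
  let e : (Representation.ofModule' (k := k) (G := G) M).asModule ≃ₗ[k[G]] M :=
    { (Representation.ofModule' M).asModuleEquiv with
      map_smul' := fun r x => by
        simp [Representation.asAlgebraHom_ofModule'] }
  exact (Representation.irreducible_iff_isSimpleModule_asModule _).2 (IsSimpleModule.congr e)

end OfModule

section ClassSum

variable (k : Type*) {G : Type*} [CommSemiring k]

noncomputable def classSum (s : Finset G) : k[G] := ∑ g ∈ s, single g 1

variable {k}

theorem classSum_singleton (g : G) : classSum k {g} = single g 1 := Finset.sum_singleton _ _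

theorem classSum_commute [Group G] {s : Finset G} (hs : ∀ x ∈ s, ∀ g : G, g * x * g⁻¹ ∈ s)
    (f : k[G]) : Commute (classSum k s) f := by
  induction f using MonoidAlgebra.induction_on with
  | of g =>
    simp only [classSum, of_apply, Commute, SemiconjBy, Finset.sum_mul, Finset.mul_sum,
      single_mul_single, mul_one]
    refine Finset.sum_nbij' (fun x => g⁻¹ * x * g) (fun x => g * x * g⁻¹) ?_ ?_ ?_ ?_ ?_
    · intro x hx
      simpa using hs x hx g⁻¹
    · exact fun x hx => hs x hx g
    all_goals intro x _; group
  | add f f' hf hf' => exact hf.add_right hf'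
  | smul r f hf => exact hf.smul_right r

end ClassSum

theorem cayleyAdj_mulVec_coeff {G : Type*} [Group G] [Fintype G] {S : Set G}
    (hSinv : ∀ s ∈ S, s⁻¹ ∈ S) (u : ℂ[G]) :
    cayleyAdj S *ᵥ ⇑u.coeff = ⇑(classSum ℂ S.toFinset * u).coeff := by
  funext g
  simp only [Matrix.mulVec, dotProduct, cayleyAdj, ite_mul, one_mul, zero_mul,
    Finset.sum_ite, Finset.sum_const_zero, add_zero, classSum, Finset.sum_mul, coeff_sum,
    Finsupp.finsetSum_apply, coeff_single_mul_apply]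
  refine Finset.sum_nbij' (fun h => g * h⁻¹) (fun s => s⁻¹ * g) ?_ ?_ ?_ ?_ ?_
  · intro h hh
    simpa using hSinv _ (Finset.mem_filter.1 hh).2
  · intro s hs
    simpa [mul_assoc] using hSinv _ (Set.mem_toFinset.1 hs)
  all_goals intro x _; group

theorem FDRep.sum_character_ofModule' {k : Type u} {G : Type*} [Field k] [Group G] (M : Type u)
    [AddCommGroup M] [Module k M] [Module k[G] M] [IsScalarTower k k[G] M]
    [FiniteDimensional k M] (s : Finset G) {c : k} (hc : ∀ x : M, classSum k s • x = c • x) :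
    ∑ g ∈ s, (FDRep.of (Representation.ofModule' (G := G) M)).character g
      = c * Module.finrank k M := by
  have hsum : ∑ g ∈ s, Representation.ofModule' (k := k) M g = c • LinearMap.id := by
    have : ∑ g ∈ s, Representation.ofModule' (k := k) M g
        = (Representation.ofModule' M).asAlgebraHom (classSum k s) := by
      simp [classSum]
    rw [this, Representation.asAlgebraHom_ofModule']
    exact LinearMap.ext hc
  simp only [FDRep.character, FDRep.of_ρ', ← map_sum, hsum, map_smul, LinearMap.trace_id,
    smul_eq_mul]

theorem exists_eigenvalues_of_isSimpleModule {G : Type} [Group G] [Fintype G]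
    (M : Type) [AddCommGroup M] [Module ℂ M] [Module ℂ[G] M] [IsScalarTower ℂ ℂ[G] M]
    [FiniteDimensional ℂ M] [IsSimpleModule ℂ[G] M]
    {t : G} (ht2 : t ^ 2 = 1) (htz : t ∈ Subgroup.center G)
    {S : Set G} (hSconj : ∀ s ∈ S, ∀ g : G, g * s * g⁻¹ ∈ S)
    (hint : ∀ V : FDRep ℂ G, Simple V →
      ∃ m : ℤ, (∑ s ∈ S.toFinset, V.character s) = (m : ℂ) * V.character 1)
    {a : ℤ} (hmod : ∀ V : FDRep ℂ G, Simple V → ∀ m : ℤ,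
      (∑ s ∈ S.toFinset, V.character s) = (m : ℂ) * V.character 1 →
        ((V.character t = V.character 1 → m ≡ a [ZMOD 4]) ∧
         (V.character t = -V.character 1 → m ≡ a + 2 [ZMOD 4]))) :
    ∃ (m : ℤ) (j : ℕ), (∀ x : M, classSum ℂ S.toFinset • x = (m : ℂ) • x) ∧
      (∀ x : M, single t (1 : ℂ) • x = (-1 : ℂ) ^ j • x) ∧ m ≡ a + 2 * j [ZMOD 4] := by
  let V := FDRep.of (Representation.ofModule' (k := ℂ) (G := G) M)
  have hV : Simple V :=
    FDRep.simple_of_isIrreducible V (h := Representation.isIrreducible_ofModule' M)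
  have := IsSimpleModule.nontrivial ℂ[G] M
  have hn : (Module.finrank ℂ M : ℂ) ≠ 0 := by exact_mod_cast Module.finrank_pos.ne'
  have hχ1 : V.character 1 = Module.finrank ℂ M := FDRep.char_one V
  obtain ⟨c, hc⟩ := IsSimpleModule.exists_smul_eq_of_commute ℂ (V := M)
    (classSum_commute (k := ℂ) (s := S.toFinset) (by simpa using hSconj))
  obtain ⟨ε, hε⟩ := IsSimpleModule.exists_smul_eq_of_commute ℂ (V := M)
    (MonoidAlgebra.single_commute (R := ℂ) (fun g => (Subgroup.mem_center_iff.1 htz g).symm)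
      (fun r => Commute.one_left r) (r := 1))
  have hχS := FDRep.sum_character_ofModule' M S.toFinset hc
  have hχt : V.character t = ε * Module.finrank ℂ M := by
    simpa using FDRep.sum_character_ofModule' M {t} (by simpa [classSum_singleton])
  obtain ⟨m, hm⟩ := hint V hV
  have hcm : c = m := mul_right_cancel₀ hn (by rw [← hχS, hm, hχ1])
  have hε2 : ε * ε = 1 := by
    obtain ⟨x, hx⟩ := exists_ne (0 : M)
    have : single t (1 : ℂ) • single t (1 : ℂ) • x = x := by
      rw [smul_smul, single_mul_single, ← pow_two, ht2, mul_one, ← one_def, one_smul]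
    rw [hε, smul_comm, hε, smul_smul] at this
    exact smul_left_injective ℂ hx (this.trans (one_smul ℂ x).symm)
  refine ⟨m, ?_⟩
  rcases mul_self_eq_one_iff.1 hε2 with rfl | rfl
  · refine ⟨0, fun x => hcm ▸ hc x, by simpa using hε, ?_⟩
    simpa using ((hmod V hV m hm).1 (by rw [hχt, hχ1, one_mul]))
  · refine ⟨1, fun x => hcm ▸ hc x, by simpa using hε, ?_⟩
    simpa using ((hmod V hV m hm).2 (by rw [hχt, hχ1, neg_one_mul]))

theorem exp_cayleyAdj_mulVec_coeff {G : Type*} [Group G] [Fintype G] {S : Set G}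
    (hSinv : ∀ s ∈ S, s⁻¹ ∈ S) {t : G} {a : ℤ}
    (hW : ∀ W : Submodule ℂ[G] ℂ[G], IsSimpleModule ℂ[G] W → ∃ (m : ℤ) (j : ℕ),
      (∀ x : W, classSum ℂ S.toFinset • x = (m : ℂ) • x) ∧
      (∀ x : W, single t (1 : ℂ) • x = (-1 : ℂ) ^ j • x) ∧ m ≡ a + 2 * j [ZMOD 4])
    (u : ℂ[G]) :
    NormedSpace.exp ((-(↑(Real.pi / 2) : ℂ) * Complex.I) • cayleyAdj S) *ᵥ ⇑u.coeff
      = Complex.exp (-(↑(Real.pi / 2)) * Complex.I * a) • ⇑(single t (1 : ℂ) * u).coeff := by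
  have hu : u ∈ sSup {W : Submodule ℂ[G] ℂ[G] | IsSimpleModule ℂ[G] W} := by
    rw [IsSemisimpleModule.sSup_simples_eq_top]; trivial
  rw [sSup_eq_iSup'] at hu
  induction hu using Submodule.iSup_induction' with
  | mem W u hu =>
    obtain ⟨m, j, hm, ht, hmj⟩ := hW W.1 W.2
    have hzu : classSum ℂ S.toFinset * u = (m : ℂ) • u := congrArg Subtype.val (hm ⟨u, hu⟩)
    have htu : single t (1 : ℂ) * u = (-1 : ℂ) ^ j • u := congrArg Subtype.val (ht ⟨u, hu⟩)
    have hA : ((-(↑(Real.pi / 2) : ℂ) * Complex.I) • cayleyAdj S) *ᵥ ⇑u.coeff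
        = (-(↑(Real.pi / 2)) * Complex.I * m) • ⇑u.coeff := by
      rw [Matrix.smul_mulVec, cayleyAdj_mulVec_coeff hSinv, hzu, coeff_smul, Finsupp.coe_smul,
        smul_smul]
    rw [Matrix.exp_mulVec_of_mulVec_eq_smul hA, ← Complex.exp_eq_exp_ℂ,
      Complex.exp_neg_pi_div_two_mul_I_of_modEq j hmj, htu, coeff_smul, Finsupp.coe_smul, mul_smul]
  | zero => simp
  | add u v _ _ hu hv =>
    simp only [mul_add, coeff_add, Finsupp.coe_add, Matrix.mulVec_add, hu, hv, smul_add]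

open CategoryTheory in
theorem stmt_5_general (G : Type) [Group G] [Fintype G]
    (t : G) (ht2 : t ^ 2 = 1) (htz : t ∈ Subgroup.center G)
    (S : Set G) (hSinv : ∀ s ∈ S, s⁻¹ ∈ S)
    (hSconj : ∀ s ∈ S, ∀ g : G, g * s * g⁻¹ ∈ S)
    (hint : ∀ V : FDRep ℂ G, Simple V →
      ∃ m : ℤ, (∑ s ∈ S.toFinset, V.character s) = (m : ℂ) * V.character 1)
    (hmod : ∃ a : ℤ, ∀ V : FDRep ℂ G, Simple V → ∀ m : ℤ,
      (∑ s ∈ S.toFinset, V.character s) = (m : ℂ) * V.character 1 →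
        ((V.character t = V.character 1 → m ≡ a [ZMOD 4]) ∧
         (V.character t = -V.character 1 → m ≡ a + 2 [ZMOD 4]))) :
    ∀ x : G, ∃ τ : ℝ, pst (cayleyAdj S) x (x * t) τ := by
  obtain ⟨a, hmod⟩ := hmod
  intro x
  refine ⟨Real.pi / 2, Complex.exp (-(↑(Real.pi / 2)) * Complex.I * a), ?_, ?_⟩
  · rw [show -(↑(Real.pi / 2) : ℂ) * Complex.I * a = ↑(-(Real.pi / 2) * a) * Complex.I by
      push_cast; ring]
    exact Complex.norm_exp_ofReal_mul_I _
  · have h := exp_cayleyAdj_mulVec_coeff hSinv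
      (fun W _ => exists_eigenvalues_of_isSimpleModule W ht2 htz hSconj hint hmod) (single x 1)
    rwa [single_mul_single, one_mul, ← Subgroup.mem_center_iff.1 htz x, coeff_single, coeff_single,
      Finsupp.single_eq_pi_single, Finsupp.single_eq_pi_single] at h

open CategoryTheory in
/-- PST criterion for graphs in the conjugacy class scheme of a finite group. -/
theorem stmt_5 (G : Type) [Group G] [Fintype G]
    (t : G) (ht1 : t ≠ 1) (ht2 : t ^ 2 = 1) (htz : t ∈ Subgroup.center G)
    (S : Set G) (hS1 : (1 : G) ∉ S) (hSinv : ∀ s ∈ S, s⁻¹ ∈ S)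
    (hSconj : ∀ s ∈ S, ∀ g : G, g * s * g⁻¹ ∈ S)
    (hint : ∀ V : FDRep ℂ G, Simple V →
      ∃ m : ℤ, (∑ s ∈ S.toFinset, V.character s) = (m : ℂ) * V.character 1)
    (hmod : ∃ a : ℤ, ∀ V : FDRep ℂ G, Simple V → ∀ m : ℤ,
      (∑ s ∈ S.toFinset, V.character s) = (m : ℂ) * V.character 1 →
        ((V.character t = V.character 1 → m ≡ a [ZMOD 4]) ∧
         (V.character t = -V.character 1 → m ≡ a + 2 [ZMOD 4]))) :
    ∀ x : G, ∃ τ : ℝ, pst (cayleyAdj S) x (x * t) τ :=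
  stmt_5_general G t ht2 htz S hSinv hSconj hint hmod
end

section
/- Let G be a finite group, H ≤ G a subgroup, and d ∈ G. Let A_d be the 0–1 matrix indexed by the left coset space G/H with (xH, yH) entry 1 iff x⁻¹y ∈ HdH, and 0 otherwise. Then A_d is a permutation matrix if and only if d ∈ N_G(H), and A_d is a permutation matrix of order 2 if and only if d ∈ N_G(H) \ H and d² ∈ H. -/
open scoped Classical

/-- The 0-1 matrix on the left coset space `G ⧸ H` whose `(xH, yH)` entry is `1`
iff `x⁻¹y` lies in the double coset `HdH`. -/
noncomputable def dcosetMatrix (G : Type*) [Group G] (H : Subgroup G) (d : G) :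
    Matrix (G ⧸ H) (G ⧸ H) ℂ := fun a b =>
  if ∃ x y : G, (QuotientGroup.mk x : G ⧸ H) = a ∧ (QuotientGroup.mk y : G ⧸ H) = b ∧
      ∃ h₁ h₂ : G, h₁ ∈ H ∧ h₂ ∈ H ∧ x⁻¹ * y = h₁ * d * h₂ then 1 else 0

/-- A square 0-1 matrix with exactly one 1 in each row and each column. -/
def IsPermMatrix {V : Type*} (A : Matrix V V ℂ) : Prop :=
  (∀ i j, A i j = 0 ∨ A i j = 1) ∧ (∀ i, ∃! j, A i j = 1) ∧ (∀ j, ∃! i, A i j = 1)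

/-!
When `d` normalizes `H`, the double coset `HdH` is the single left coset `dH`, so `A_d` is the
permutation matrix of right multiplication `xH ↦ xdH`. These permutations compose like the
elements of `N_G(H)` and are trivial exactly for `d ∈ H`, so `A_d² = A_{d²}` and `A_d = 1 ↔ d ∈ H`.
Conversely, the uniqueness of the `1` in the row and in the column of the coset `H` forces
`HdH = dH` and `Hd⁻¹H = d⁻¹H`, i.e. conjugation by `d` and by `d⁻¹` both preserve `H`.
-/
open DoubleCoset
open scoped Matrix

theorem Equiv.Perm.permMatrix_apply {n R : Type*} [DecidableEq n] [Zero R] [One R]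
    (σ : Equiv.Perm n) (i j : n) : σ.permMatrix R i j = if j = σ i then 1 else 0 := by
  rw [Equiv.Perm.permMatrix, PEquiv.toMatrix_toPEquiv_apply, Pi.single_apply]

theorem Equiv.Perm.permMatrix_eq_one_iff {n R : Type*} [DecidableEq n] [Zero R] [One R]
    [NeZero (1 : R)] {σ : Equiv.Perm n} : σ.permMatrix R = 1 ↔ σ = 1 := by
  refine ⟨fun h => Equiv.ext fun i => ?_, fun h => h ▸ Matrix.permMatrix_one⟩
  simpa [Equiv.Perm.permMatrix_apply, Matrix.one_apply, eq_comm] using congr_fun₂ h i (σ i)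

theorem isPermMatrix_permMatrix {V : Type*} [DecidableEq V] (σ : Equiv.Perm V) :
    IsPermMatrix (σ.permMatrix ℂ) := by
  have hone : ∀ i j, σ.permMatrix ℂ i j = 1 ↔ j = σ i := fun i j => by
    rw [Equiv.Perm.permMatrix_apply]
    split_ifs with h <;> simp [h]
  refine ⟨fun i j => ?_, fun i => ⟨σ i, (hone i _).mpr rfl, fun j hj => (hone i j).mp hj⟩,
    fun j => ⟨σ.symm j, (hone _ j).mpr (σ.apply_symm_apply j).symm,
      fun i hi => σ.eq_symm_apply.mpr ((hone i j).mp hi).symm⟩⟩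
  rw [Equiv.Perm.permMatrix_apply]
  split_ifs <;> simp

section

variable {G : Type*} [Group G] {H : Subgroup G} {d : G}

theorem mem_doubleCoset_iff_of_mem_normalizer (hd : d ∈ Subgroup.normalizer (H : Set G))
    {g : G} : g ∈ doubleCoset d H H ↔ d⁻¹ * g ∈ H := by
  rw [mem_doubleCoset]
  constructor
  · rintro ⟨h₁, hh₁, h₂, hh₂, rfl⟩
    have hconj : d⁻¹ * h₁ * d ∈ H := (Subgroup.mem_normalizer_iff''.mp hd h₁).mp hh₁
    simpa only [mul_assoc] using H.mul_mem hconj hh₂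
  · intro hg
    exact ⟨1, H.one_mem, d⁻¹ * g, hg, by group⟩

variable (H d) in
theorem dcosetMatrix_mk_mk (x y : G) :
    dcosetMatrix G H d x y = if x⁻¹ * y ∈ doubleCoset d H H then 1 else 0 := by
  refine if_congr ⟨?_, fun hxy => ⟨x, y, rfl, rfl, ?_⟩⟩ rfl rfl
  · rintro ⟨x', y', hx, hy, h₁, h₂, hh₁, hh₂, hxy'⟩
    have hx' : x⁻¹ * x' ∈ H := QuotientGroup.eq.mp hx.symm
    have hy' : y'⁻¹ * y ∈ H := QuotientGroup.eq.mp hy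
    refine mem_doubleCoset.mpr ⟨x⁻¹ * x' * h₁, H.mul_mem hx' hh₁, h₂ * (y'⁻¹ * y),
      H.mul_mem hh₂ hy', ?_⟩
    calc x⁻¹ * y = x⁻¹ * x' * (x'⁻¹ * y') * (y'⁻¹ * y) := by group
      _ = _ := by rw [hxy']; group
  · obtain ⟨h₁, hh₁, h₂, hh₂, hxy⟩ := mem_doubleCoset.mp hxy
    exact ⟨h₁, h₂, hh₁, hh₂, hxy⟩

theorem inv_mem_doubleCoset_inv {K : Subgroup G} {g : G} (hg : g ∈ doubleCoset d H K) :
    g⁻¹ ∈ doubleCoset d⁻¹ K H := by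
  obtain ⟨h, hh, k, hk, rfl⟩ := mem_doubleCoset.mp hg
  exact mem_doubleCoset.mpr ⟨k⁻¹, K.inv_mem hk, h⁻¹, H.inv_mem hh, by group⟩

variable (H d) in
theorem transpose_dcosetMatrix : (dcosetMatrix G H d)ᵀ = dcosetMatrix G H d⁻¹ := by
  ext a b
  induction a using QuotientGroup.induction_on with | H x =>
  induction b using QuotientGroup.induction_on with | H y =>
  rw [Matrix.transpose_apply, dcosetMatrix_mk_mk, dcosetMatrix_mk_mk]
  refine if_congr ⟨fun h => by simpa using inv_mem_doubleCoset_inv h,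
    fun h => by simpa using inv_mem_doubleCoset_inv h⟩ rfl rfl

theorem conj_mem_of_existsUnique_dcosetMatrix_row
    (hrow : ∃! b, dcosetMatrix G H d (1 : G) b = 1) {h : G} (hh : h ∈ H) : d⁻¹ * h * d ∈ H := by
  have hentry : ∀ g ∈ doubleCoset d H H, dcosetMatrix G H d (1 : G) g = 1 := fun g hg => by
    rw [dcosetMatrix_mk_mk, inv_one, one_mul, if_pos hg]
  have hd := hentry d (mem_doubleCoset_self H H d)
  have hhd := hentry (h⁻¹ * d) (mem_doubleCoset.mpr ⟨h⁻¹, H.inv_mem hh, 1, H.one_mem, by group⟩)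
  have hcoset : ((h⁻¹ * d : G) : G ⧸ H) = d := hrow.unique hhd hd
  simpa [mul_assoc] using QuotientGroup.eq.mp hcoset

theorem mem_normalizer_of_isPermMatrix (hA : IsPermMatrix (dcosetMatrix G H d)) :
    d ∈ Subgroup.normalizer (H : Set G) := by
  have hcol : ∃! b, dcosetMatrix G H d⁻¹ (1 : G) b = 1 := by
    simpa only [← transpose_dcosetMatrix, Matrix.transpose_apply] using hA.2.2 (1 : G)
  refine Subgroup.mem_normalizer_iff''.mpr fun h =>
    ⟨conj_mem_of_existsUnique_dcosetMatrix_row (hA.2.1 _), fun hh => ?_⟩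
  simpa [mul_assoc] using conj_mem_of_existsUnique_dcosetMatrix_row hcol hh

def cosetRightMul (hd : d ∈ Subgroup.normalizer (H : Set G)) : Equiv.Perm (G ⧸ H) :=
  MulAction.toPerm (⟨MulOpposite.op d, hd⟩ : (Subgroup.normalizer (H : Set G)).op)

theorem cosetRightMul_mk (hd : d ∈ Subgroup.normalizer (H : Set G)) (x : G) :
    cosetRightMul hd x = ↑(x * d) :=
  rfl

theorem cosetRightMul_mul_self (hd : d ∈ Subgroup.normalizer (H : Set G)) :
    cosetRightMul hd * cosetRightMul hd = cosetRightMul (pow_mem hd 2) := by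
  ext a
  induction a using QuotientGroup.induction_on with | H x =>
  simp only [Equiv.Perm.mul_apply, cosetRightMul_mk, mul_assoc, pow_two]

theorem cosetRightMul_eq_one_iff (hd : d ∈ Subgroup.normalizer (H : Set G)) :
    cosetRightMul hd = 1 ↔ d ∈ H := by
  refine ⟨fun h => ?_, fun h => Equiv.ext fun a => ?_⟩
  · have hfix : cosetRightMul hd (1 : G) = ((1 : G) : G ⧸ H) := by rw [h]; rfl
    rw [cosetRightMul_mk, QuotientGroup.eq] at hfix
    simpa using hfix
  · induction a using QuotientGroup.induction_on with | H x =>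
    exact QuotientGroup.mk_mul_of_mem x h

theorem dcosetMatrix_eq_permMatrix (hd : d ∈ Subgroup.normalizer (H : Set G)) :
    dcosetMatrix G H d = (cosetRightMul hd).permMatrix ℂ := by
  ext a b
  induction a using QuotientGroup.induction_on with | H x =>
  induction b using QuotientGroup.induction_on with | H y =>
  rw [dcosetMatrix_mk_mk, Equiv.Perm.permMatrix_apply]
  refine if_congr ?_ rfl rfl
  rw [cosetRightMul_mk, eq_comm, QuotientGroup.eq,
    mem_doubleCoset_iff_of_mem_normalizer hd, mul_inv_rev, mul_assoc]

theorem dcosetMatrix_mul_self [Fintype (G ⧸ H)] (hd : d ∈ Subgroup.normalizer (H : Set G)) :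
    dcosetMatrix G H d * dcosetMatrix G H d = dcosetMatrix G H (d ^ 2) := by
  rw [dcosetMatrix_eq_permMatrix hd, dcosetMatrix_eq_permMatrix (pow_mem hd 2),
    ← Matrix.permMatrix_mul, cosetRightMul_mul_self]

theorem dcosetMatrix_eq_one_iff (hd : d ∈ Subgroup.normalizer (H : Set G)) :
    dcosetMatrix G H d = 1 ↔ d ∈ H := by
  rw [dcosetMatrix_eq_permMatrix hd, Equiv.Perm.permMatrix_eq_one_iff, cosetRightMul_eq_one_iff]

end

/-- `A_d` is a permutation matrix iff `d ∈ N_G(H)`, and has order 2 iff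
moreover `d ∉ H` and `d² ∈ H`. -/
theorem stmt_6 (G : Type) [Group G] [Fintype G] (H : Subgroup G) (d : G) :
    (IsPermMatrix (dcosetMatrix G H d) ↔ d ∈ Subgroup.normalizer (H : Set G)) ∧
    ((IsPermMatrix (dcosetMatrix G H d) ∧
        dcosetMatrix G H d * dcosetMatrix G H d = 1 ∧ dcosetMatrix G H d ≠ 1) ↔
      (d ∈ Subgroup.normalizer (H : Set G) ∧ d ∉ H ∧ d ^ 2 ∈ H)) := by
  have hperm : IsPermMatrix (dcosetMatrix G H d) ↔ d ∈ Subgroup.normalizer (H : Set G) :=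
    ⟨mem_normalizer_of_isPermMatrix,
      fun hd => dcosetMatrix_eq_permMatrix hd ▸ isPermMatrix_permMatrix _⟩
  refine ⟨hperm, ?_⟩
  rw [hperm]
  refine and_congr_right fun hd => ?_
  rw [dcosetMatrix_mul_self hd, dcosetMatrix_eq_one_iff (pow_mem hd 2),
    ne_eq, dcosetMatrix_eq_one_iff hd, and_comm]
end

section
/- Let q be an odd prime power, S the set of squares and N the set of non-squares in 𝔽_q^×, and T = {z ∈ 𝔽_{q²}^× \ 𝔽_q^× : z^{q+1} ∈ {1} ∪ N}. For every nontrivial group homomorphism λ: 𝔽_q^× → ℂ^×, one has ∑_{z ∈ T} λ(z^{q+1}) = (q−1) − (q+1)·∑_{s ∈ S} λ(s). -/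
/-!
The map `z ↦ z ^ (q + 1)` is a homomorphism `𝔽_{q²}^× → 𝔽_q^×` whose kernel, the `(q + 1)`-st
roots of unity, has at most `q + 1` elements; since `q² - 1 = (q + 1)(q - 1)` it is onto, with all
fibres of size `q + 1`. So for `f = λ · 1_{{1} ∪ N}`, the sum of `f(z ^ (q + 1))` over all of
`𝔽_{q²}^×` is `(q + 1) ∑ f = (q + 1)(1 - ∑_S λ)`, because `∑ λ = 0`. On `𝔽_q^×` the map is
`x ↦ x²`, whose values are squares, so there `f` only sees `x = ±1` and contributes `2`.
-/

open scoped Classical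

open Finset

section Fibres

variable {G H M : Type*} [Group G] [Group H] [Fintype G] [AddCommMonoid M]

theorem MonoidHom.sum_comp_eq_card_ker_nsmul (φ : G →* H) (g : H → M) :
    ∑ x, g (φ x) = Nat.card φ.ker • ∑ y ∈ univ.image φ, g y := by
  rw [sum_comp, smul_sum]
  refine sum_congr rfl fun y hy => ?_
  obtain ⟨x, -, rfl⟩ := mem_image.mp hy
  rw [MonoidHom.card_fiber_eq_of_mem_range φ ⟨x, rfl⟩ ⟨1, map_one φ⟩, Nat.card_eq_fintype_card,
    Fintype.card_subtype]
  simp only [MonoidHom.mem_ker]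

theorem MonoidHom.sum_comp_of_card_ker_le [Fintype H] (φ : G →* H) {k : ℕ}
    (hG : Fintype.card G = k * Fintype.card H) (hker : Nat.card φ.ker ≤ k) (g : H → M) :
    ∑ x, g (φ x) = k • ∑ y, g y := by
  have hcard : Fintype.card G = Nat.card φ.ker * #(univ.image φ) := by
    simpa only [sum_const, card_univ, smul_eq_mul, mul_one] using
      φ.sum_comp_eq_card_ker_nsmul (fun _ => (1 : ℕ))
  have himage : #(univ.image φ) ≤ Fintype.card H := card_le_univ _
  have hk : Nat.card φ.ker = k := by
    refine le_antisymm hker (Nat.le_of_mul_le_mul_right ?_ (Fintype.card_pos (α := H)))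
    calc k * Fintype.card H = Nat.card φ.ker * #(univ.image φ) := hG.symm.trans hcard
      _ ≤ Nat.card φ.ker * Fintype.card H := Nat.mul_le_mul_left _ himage
  have hsurj : univ.image φ = univ := eq_univ_of_card _ <|
    Nat.eq_of_mul_eq_mul_left Nat.card_pos (by rw [← hcard, hG, hk])
  rw [φ.sum_comp_eq_card_ker_nsmul, hk, hsurj]

end Fibres

section NormMap

variable {F K : Type*} [Field F] [CommRing K] [IsDomain K] [Algebra F K]

def unitsHomOfAlgebraMapEqPow (k : ℕ) (Nm : Kˣ → Fˣ)
    (hNm : ∀ z : Kˣ, algebraMap F K (Nm z) = (z : K) ^ k) : Kˣ →* Fˣ where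
  toFun := Nm
  map_one' := Units.ext <| (algebraMap F K).injective <| by simp [hNm]
  map_mul' z w := Units.ext <| (algebraMap F K).injective <| by simp [hNm, mul_pow]

variable {k : ℕ} {Nm : Kˣ → Fˣ}

theorem ker_unitsHomOfAlgebraMapEqPow (hNm : ∀ z : Kˣ, algebraMap F K (Nm z) = (z : K) ^ k) :
    (unitsHomOfAlgebraMapEqPow k Nm hNm).ker = rootsOfUnity k K := by
  ext z
  rw [MonoidHom.mem_ker, mem_rootsOfUnity, ← Units.val_eq_one, ← Units.val_eq_one,
    ← (algebraMap F K).injective.eq_iff]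
  simp [unitsHomOfAlgebraMapEqPow, hNm]

theorem apply_units_map_of_algebraMap_eq_pow
    (hNm : ∀ z : Kˣ, algebraMap F K (Nm z) = (z : K) ^ k) (x : Fˣ) :
    Nm (Units.map (algebraMap F K : F →* K) x) = x ^ k :=
  Units.ext <| (algebraMap F K).injective <| by simp [hNm]

end NormMap

theorem sum_filter_val_mem_range_algebraMap {F K M : Type*} [Field F] [Ring K] [Nontrivial K]
    [Algebra F K] [Fintype Fˣ] [Fintype Kˣ] [AddCommMonoid M]
    [DecidablePred fun z : Kˣ => (z : K) ∈ Set.range (algebraMap F K)] (g : Kˣ → M) :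
    ∑ z ∈ univ.filter (fun z : Kˣ => (z : K) ∈ Set.range (algebraMap F K)), g z
      = ∑ x : Fˣ, g (Units.map (algebraMap F K : F →* K) x) := by
  let e : Fˣ ↪ Kˣ :=
    ⟨Units.map (algebraMap F K : F →* K), Units.map_injective (algebraMap F K).injective⟩
  have hrange : univ.filter (fun z : Kˣ => (z : K) ∈ Set.range (algebraMap F K)) = univ.map e := by
    ext z
    simp only [mem_filter, mem_univ, true_and, mem_map, Set.mem_range]
    constructor
    · rintro ⟨x, hx⟩
      have hx0 : x ≠ 0 := by
        rintro rfl
        exact z.ne_zero (by simpa using hx.symm)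
      exact ⟨Units.mk0 x hx0, Units.ext hx⟩
    · rintro ⟨x, rfl⟩
      exact ⟨x, rfl⟩
  rw [hrange, sum_map]
  rfl

section QuadraticExtension

variable {F K M : Type*} [Field F] [Field K] [Fintype F] [Fintype K] [Algebra F K]
  [AddCommMonoid M] {q : ℕ} {Nm : Kˣ → Fˣ}

theorem sum_comp_of_algebraMap_eq_pow_card_add_one (hF : Fintype.card F = q)
    (hK : Fintype.card K = q ^ 2) (hNm : ∀ z : Kˣ, algebraMap F K (Nm z) = (z : K) ^ (q + 1))
    (g : Fˣ → M) : ∑ z, g (Nm z) = (q + 1) • ∑ a, g a := by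
  have hcard : Fintype.card Kˣ = (q + 1) * Fintype.card Fˣ := by
    rw [Fintype.card_units, Fintype.card_units, hK, hF, ← Nat.sq_sub_sq, one_pow]
  refine (unitsHomOfAlgebraMapEqPow (q + 1) Nm hNm).sum_comp_of_card_ker_le hcard ?_ g
  rw [ker_unitsHomOfAlgebraMapEqPow hNm]
  exact card_rootsOfUnity K (q + 1)

theorem sum_filter_mem_range_comp_of_algebraMap_eq_pow_card_add_one (hF : Fintype.card F = q)
    (hNm : ∀ z : Kˣ, algebraMap F K (Nm z) = (z : K) ^ (q + 1)) (g : Fˣ → M) :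
    ∑ z ∈ univ.filter (fun z : Kˣ => (z : K) ∈ Set.range (algebraMap F K)), g (Nm z)
      = ∑ x : Fˣ, g (x ^ 2) := by
  rw [sum_filter_val_mem_range_algebraMap]
  refine sum_congr rfl fun x _ => congrArg g ?_
  rw [apply_units_map_of_algebraMap_eq_pow hNm, pow_succ, sq]
  congr 1
  exact Units.ext <| by rw [Units.val_pow_eq_pow_val, ← hF, FiniteField.pow_card]

end QuadraticExtension

theorem sum_filter_eq_one_or_not_square {G R : Type*} [Group G] [Fintype G] [DecidableEq G]
    [DecidablePred fun s : G => ∃ w : G, w ^ 2 = s] [CommRing R] [IsDomain R]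
    (χ : G →* R) (hχ : χ ≠ 1) :
    ∑ a ∈ univ.filter (fun a : G => a = 1 ∨ ¬∃ w : G, w ^ 2 = a), χ a
      = 1 - ∑ s ∈ univ.filter (fun s : G => ∃ w : G, w ^ 2 = s), χ s := by
  have hsplit : univ.filter (fun a : G => a = 1 ∨ ¬∃ w : G, w ^ 2 = a)
      = insert 1 (univ.filter fun a : G => ¬∃ w : G, w ^ 2 = a) := by
    ext a
    simp only [mem_filter, mem_univ, true_and, mem_insert]
  have hone : (1 : G) ∉ univ.filter fun a : G => ¬∃ w : G, w ^ 2 = a := by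
    simpa using ⟨1, one_pow 2⟩
  have htotal := sum_filter_add_sum_filter_not univ (fun s : G => ∃ w : G, w ^ 2 = s) χ
  rw [sum_hom_units_eq_zero χ hχ] at htotal
  rw [hsplit, sum_insert hone, map_one]
  linear_combination htotal

theorem sum_ite_sq_eq_one_or_not_square {G R : Type*} [Monoid G] [Fintype G] [DecidableEq G]
    [DecidablePred fun s : G => ∃ w : G, w ^ 2 = s] [Semiring R] (χ : G →* R) :
    ∑ x : G, (if x ^ 2 = 1 ∨ ¬∃ w : G, w ^ 2 = x ^ 2 then χ (x ^ 2) else 0)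
      = #{x : G | x ^ 2 = 1} := by
  rw [Finset.card_filter, Nat.cast_sum]
  refine sum_congr rfl fun x _ => ?_
  have hsquare : ¬¬∃ w : G, w ^ 2 = x ^ 2 := not_not.mpr ⟨x, rfl⟩
  simp only [or_iff_left hsquare]
  split_ifs with h
  · rw [h, map_one, Nat.cast_one]
  · rw [Nat.cast_zero]

theorem card_filter_units_sq_eq_one {R : Type*} [CommRing R] [IsDomain R] [Fintype Rˣ]
    (hR : ringChar R ≠ 2) : #{x : Rˣ | x ^ 2 = 1} = 2 := by
  have : ({x : Rˣ | x ^ 2 = 1} : Finset Rˣ) = {1, -1} := by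
    ext x
    simp only [mem_filter, mem_univ, true_and, mem_insert, mem_singleton, Units.ext_iff,
      Units.val_pow_eq_pow_val, Units.val_one, Units.val_neg, sq_eq_one_iff]
  rw [this, card_pair]
  exact fun h => Ring.neg_one_ne_one_of_char_ne_two hR (by simpa [Units.ext_iff] using h.symm)

theorem stmt_9_general (q : ℕ) (hodd : Odd q)
    (F K : Type) [Field F] [Field K] [Fintype F] [Fintype K] [Algebra F K]
    (hF : Fintype.card F = q) (hK : Fintype.card K = q ^ 2)
    (Nm : Kˣ → Fˣ) (hNm : ∀ z : Kˣ, algebraMap F K (Nm z) = (z : K) ^ (q + 1))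
    (lam : Fˣ →* ℂˣ) (hlam : lam ≠ 1) :
    ∑ z ∈ Finset.univ.filter (fun z : Kˣ =>
        (z : K) ∉ Set.range (algebraMap F K) ∧
          (Nm z = 1 ∨ ¬ ∃ w : Fˣ, w ^ 2 = Nm z)),
      ((lam (Nm z) : ℂˣ) : ℂ)
    = ((q : ℂ) - 1) - ((q : ℂ) + 1) *
        ∑ s ∈ Finset.univ.filter (fun s : Fˣ => ∃ w : Fˣ, w ^ 2 = s),
          ((lam s : ℂˣ) : ℂ) := by
  let χ : Fˣ →* ℂ := (Units.coeHom ℂ).comp lam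
  have hχ : χ ≠ 1 := fun h => hlam <| MonoidHom.ext fun a => Units.ext <| by
    simpa [χ] using DFunLike.congr_fun h a
  have hchar : ringChar F ≠ 2 := fun h =>
    Nat.not_even_iff_odd.mpr hodd (hF ▸ Nat.even_iff.mpr (FiniteField.even_card_of_char_two h))
  let f : Fˣ → ℂ := fun a => if a = 1 ∨ ¬∃ w : Fˣ, w ^ 2 = a then χ a else 0
  let inF : Kˣ → Prop := fun z => (z : K) ∈ Set.range (algebraMap F K)
  have hall : ∑ z, f (Nm z)
      = (q + 1) * (1 - ∑ s ∈ univ.filter (fun s : Fˣ => ∃ w : Fˣ, w ^ 2 = s), χ s) := by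
    rw [sum_comp_of_algebraMap_eq_pow_card_add_one hF hK hNm, ← sum_filter,
      sum_filter_eq_one_or_not_square χ hχ, nsmul_eq_mul]
    push_cast; ring
  have hsquares : ∑ z ∈ univ.filter inF, f (Nm z) = 2 := by
    rw [sum_filter_mem_range_comp_of_algebraMap_eq_pow_card_add_one hF hNm,
      sum_ite_sq_eq_one_or_not_square, card_filter_units_sq_eq_one hchar, Nat.cast_ofNat]
  calc _ = ∑ z ∈ univ.filter (fun z => ¬inF z), f (Nm z) := by
        rw [← filter_filter, sum_filter]; rfl
    _ = ∑ z, f (Nm z) - ∑ z ∈ univ.filter inF, f (Nm z) :=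
        eq_sub_of_add_eq (sum_filter_not_add_sum_filter _ _ _)
    _ = _ := by rw [hall, hsquares]; simp [χ]; ring

/-- character sum of `λ(z^{q+1})` over
`T = {z ∈ 𝔽_{q²}^× \ 𝔽_q^× : z^{q+1} ∈ {1} ∪ N}`. -/
theorem stmt_9 (q p n : ℕ) (hp : p.Prime) (hq : q = p ^ n) (hn : n ≠ 0) (hodd : Odd q)
    (F K : Type) [Field F] [Field K] [Fintype F] [Fintype K] [Algebra F K]
    (hF : Fintype.card F = q) (hK : Fintype.card K = q ^ 2)
    (Nm : Kˣ → Fˣ) (hNm : ∀ z : Kˣ, algebraMap F K (Nm z) = (z : K) ^ (q + 1))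
    (lam : Fˣ →* ℂˣ) (hlam : lam ≠ 1) :
    ∑ z ∈ Finset.univ.filter (fun z : Kˣ =>
        (z : K) ∉ Set.range (algebraMap F K) ∧
          (Nm z = 1 ∨ ¬ ∃ w : Fˣ, w ^ 2 = Nm z)),
      ((lam (Nm z) : ℂˣ) : ℂ)
    = ((q : ℂ) - 1) - ((q : ℂ) + 1) *
        ∑ s ∈ Finset.univ.filter (fun s : Fˣ => ∃ w : Fˣ, w ^ 2 = s),
          ((lam s : ℂˣ) : ℂ) :=
  stmt_9_general q hodd F K hF hK Nm hNm lam hlam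
end

section
/- Let q be an odd prime power, N the set of non-squares in 𝔽_q^×, and T = {z ∈ 𝔽_{q²}^× \ 𝔽_q^× : z^{q+1} ∈ {1} ∪ N}. For every group homomorphism μ: 𝔽_{q²}^× → ℂ^× such that μ ≠ μ^q (i.e., μ(z) ≠ μ(z^q) for some z ∈ 𝔽_{q²}^×), one has ∑_{z ∈ T} μ(z) = −(1 + μ(−1)). -/
open scoped Classical

/-- character sum of `μ(z)` over
`T = {z ∈ 𝔽_{q²}^× \ 𝔽_q^× : z^{q+1} ∈ {1} ∪ N}` for `μ ≠ μ^q`. -/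
theorem stmt_10 (q p n : ℕ) (hp : p.Prime) (hq : q = p ^ n) (hn : n ≠ 0) (hodd : Odd q)
    (F K : Type) [Field F] [Field K] [Fintype F] [Fintype K] [Algebra F K]
    (hF : Fintype.card F = q) (hK : Fintype.card K = q ^ 2)
    (mu : Kˣ →* ℂˣ) (hmu : ∃ z : Kˣ, mu (z ^ q) ≠ mu z) :
    ∑ z ∈ Finset.univ.filter (fun z : Kˣ =>
        (z : K) ∉ Set.range (algebraMap F K) ∧
          ((z : K) ^ (q + 1) = 1 ∨
            ∃ nn : Fˣ, (¬ ∃ w : Fˣ, w ^ 2 = nn) ∧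
              (z : K) ^ (q + 1) = algebraMap F K (nn : F))),
      ((mu z : ℂˣ) : ℂ)
    = -(1 + ((mu (-1) : ℂˣ) : ℂ)) := by
  classical
  have hq1 : 1 ≤ q := by
    rw [hq]; exact Nat.one_le_pow _ _ hp.pos
  -- abbreviations
  set P : Kˣ → Prop := fun z => (z : K) ∈ Set.range (algebraMap F K) with hPdef
  set Q : Kˣ → Prop := fun z =>
    ((z : K) ^ (q + 1) = 1 ∨
      ∃ nn : Fˣ, (¬ ∃ w : Fˣ, w ^ 2 = nn) ∧
        (z : K) ^ (q + 1) = algebraMap F K (nn : F)) with hQdef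
  have hcardK : Fintype.card Kˣ = q ^ 2 - 1 := by
    rw [Fintype.card_units, hK]
  -- Step A : the sum over all z satisfying Q is zero
  obtain ⟨z₀, hz₀⟩ := hmu
  set c : Kˣ := z₀ ^ (q - 1) with hcdef
  have hc1 : c ^ (q + 1) = 1 := by
    rw [hcdef, ← pow_mul]
    have hm : (q - 1) * (q + 1) = q ^ 2 - 1 := by
      rcases Nat.exists_eq_add_of_le hq1 with ⟨m, rfl⟩
      rw [show 1 + m - 1 = m by omega]
      have : (1 + m) ^ 2 = m * (1 + m + 1) + 1 := by ring
      omega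
    rw [hm, ← hcardK]
    exact pow_card_eq_one
  have hcmu : mu c ≠ 1 := by
    intro h
    apply hz₀
    have hz : z₀ ^ q = c * z₀ := by
      rw [hcdef, ← pow_succ, Nat.sub_add_cancel hq1]
    rw [hz, map_mul, h, one_mul]
  have hQc : ∀ z : Kˣ, Q (c * z) ↔ Q z := by
    intro z
    have hcz : ((c * z : Kˣ) : K) ^ (q + 1) = (z : K) ^ (q + 1) := by
      have : ((c ^ (q + 1) : Kˣ) : K) = 1 := by rw [hc1]; rfl
      rw [Units.val_mul, mul_pow, ← Units.val_pow_eq_pow_val, hc1]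
      simp
    simp only [hQdef, hcz]
  have keyA : ∑ z ∈ Finset.univ.filter Q, ((mu z : ℂˣ) : ℂ) = 0 := by
    have hbij : ∑ z ∈ Finset.univ.filter Q, ((mu (c * z) : ℂˣ) : ℂ)
        = ∑ z ∈ Finset.univ.filter Q, ((mu z : ℂˣ) : ℂ) := by
      refine Finset.sum_equiv (Equiv.mulLeft c) ?_ ?_
      · intro z
        simp only [Finset.mem_filter, Finset.mem_univ, true_and, Equiv.coe_mulLeft]
        exact (hQc z).symm
      · intro z _
        rfl
    have hmul : ((mu c : ℂˣ) : ℂ) * ∑ z ∈ Finset.univ.filter Q, ((mu z : ℂˣ) : ℂ)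
        = ∑ z ∈ Finset.univ.filter Q, ((mu z : ℂˣ) : ℂ) := by
      rw [Finset.mul_sum]
      rw [← hbij]
      refine Finset.sum_congr rfl fun z _ => ?_
      rw [map_mul, Units.val_mul]
    have hne : ((mu c : ℂˣ) : ℂ) ≠ 1 := by
      intro h; exact hcmu (Units.ext h)
    by_contra hS
    apply hne
    have := sub_eq_zero.mpr hmul
    rw [← sub_one_mul] at this
    rcases mul_eq_zero.mp this with h | h
    · exact sub_eq_zero.mp h
    · exact absurd h hS
  -- facts about F-points
  have hFrob : ∀ x : F, x ^ q = x := by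
    intro x; rw [← hF]; exact FiniteField.pow_card x
  have hchar : ringChar K ≠ 2 := by
    intro h2
    have := FiniteField.even_card_iff_char_two.mp h2
    rw [hK] at this
    have : ¬ Odd (q ^ 2) := by
      rw [Nat.odd_iff]; omega
    exact this (hodd.pow)
  have hneg_one : (-1 : K) ≠ 1 := Ring.neg_one_ne_one_of_char_ne_two hchar
  have hone_ne : (1 : Kˣ) ≠ -1 := by
    intro h
    have h' : ((1 : Kˣ) : K) = ((-1 : Kˣ) : K) := congrArg Units.val h
    rw [Units.val_neg, Units.val_one] at h'
    exact hneg_one h'.symm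
  -- Step B : the set of F-points satisfying Q is {1, -1}
  have keyB : Finset.univ.filter (fun z : Kˣ => Q z ∧ P z) = ({1, -1} : Finset Kˣ) := by
    ext z
    simp only [Finset.mem_filter, Finset.mem_univ, true_and, Finset.mem_insert,
      Finset.mem_singleton]
    constructor
    · rintro ⟨hQz, hPz⟩
      obtain ⟨x, hx⟩ := hPz
      have hxne : x ≠ 0 := by
        intro h0
        apply z.ne_zero
        rw [← hx, h0, map_zero]
      have hzq : (z : K) ^ q = z := by
        rw [← hx, ← map_pow, hFrob]
      have hzq1 : (z : K) ^ (q + 1) = (z : K) * (z : K) := by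
        rw [pow_succ, hzq]
      rcases hQz with h | ⟨nn, hns, h⟩
      · rw [hzq1] at h
        rcases mul_self_eq_one_iff.mp h with h1 | h1
        · exact Or.inl (Units.ext h1)
        · refine Or.inr (Units.ext ?_)
          rw [h1]; simp
      · exfalso
        apply hns
        have hx2 : algebraMap F K (x ^ 2) = algebraMap F K (nn : F) := by
          rw [map_pow, hx, ← h, hzq1, sq]
        have hxx : x ^ 2 = (nn : F) := (algebraMap F K).injective hx2
        exact ⟨Units.mk0 x hxne, Units.ext (by simpa using hxx)⟩
    · rintro (rfl | rfl)
      · constructor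
        · exact Or.inl (by simp)
        · exact ⟨1, by simp⟩
      · constructor
        · refine Or.inl ?_
          have : ((-1 : Kˣ) : K) = (-1 : K) := by simp
          rw [this]
          exact (hodd.add_one).neg_one_pow
        · exact ⟨-1, by simp⟩
  -- combine
  have hsplit := Finset.sum_filter_add_sum_filter_not (Finset.univ.filter Q) P
    (fun z => ((mu z : ℂˣ) : ℂ))
  rw [Finset.filter_filter, Finset.filter_filter] at hsplit
  have hgoal : Finset.univ.filter (fun z : Kˣ => ¬ P z ∧ Q z)
      = Finset.univ.filter (fun z : Kˣ => Q z ∧ ¬ P z) := by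
    apply Finset.filter_congr
    intro z _
    simp [and_comm]
  calc ∑ z ∈ Finset.univ.filter (fun z : Kˣ => ¬ P z ∧ Q z), ((mu z : ℂˣ) : ℂ)
      = ∑ z ∈ Finset.univ.filter (fun z : Kˣ => Q z ∧ ¬ P z), ((mu z : ℂˣ) : ℂ) := by
        rw [hgoal]
    _ = -(1 + ((mu (-1) : ℂˣ) : ℂ)) := by
        have h2 : ∑ z ∈ Finset.univ.filter (fun z : Kˣ => Q z ∧ P z), ((mu z : ℂˣ) : ℂ)
            = 1 + ((mu (-1) : ℂˣ) : ℂ) := by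
          rw [keyB, Finset.sum_pair hone_ne, map_one]
          simp
        rw [keyA, h2] at hsplit
        linear_combination hsplit
end

section
/- Let q be an odd prime power, 𝔖 ⊆ GL(2,q) the stated union of conjugacy classes, and χ₁, χ₂: 𝔽_q^× → ℂ^× two distinct group homomorphisms. Define the induced character I[χ₁,χ₂](g) = (1/|B(q)|)·∑_{u ∈ GL(2,q), u⁻¹gu ∈ B(q)} χ₁((u⁻¹gu)₁₁)·χ₂((u⁻¹gu)₂₂) and set θ = (1/(q+1))·∑_{g ∈ 𝔖} I[χ₁,χ₂](g). Then θ = q(χ₁(−1) + χ₂(−1)) + (q−1)² if χ₂ = χ₁⁻¹, and θ = q(χ₁(−1) + χ₂(−1)) otherwise. Moreover θ ≡ 2 (mod 4) if χ₁(−1)χ₂(−1) = 1, and θ ≡ 0 (mod 4) if χ₁(−1)χ₂(−1) = −1. -/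
open scoped Classical

/-- The Cayley graph `Cay(G, S)` as a simple graph (for inverse-closed `S ⊆ G \ {1}`,
`g` and `h` are adjacent iff `h * g⁻¹ ∈ S`). -/
def cayleyGraph {G : Type*} [Group G] (S : Set G) : SimpleGraph G :=
  SimpleGraph.fromRel (fun g h => h * g⁻¹ ∈ S)

/-- The representative `c₂(x) = [[x,1],[0,x]]`. -/
def c2 {F : Type*} [Field F] (x : Fˣ) : Matrix (Fin 2) (Fin 2) F :=
  !![(x : F), 1; 0, (x : F)]

/-- The representative `c₃(1,-1) = diag(1,-1)`. -/
def c3 (F : Type*) [Field F] : Matrix (Fin 2) (Fin 2) F := !![1, 0; 0, -1]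

/-- The representative `c₄(z) = [[x_z, Δ y_z],[y_z, x_z]]` for `z = x + y√Δ`. -/
def c4 {F : Type*} [Field F] (Δ x y : F) : Matrix (Fin 2) (Fin 2) F := !![x, Δ * y; y, x]

/-- The connection set `𝔖 ⊆ GL(2,q)`: all elements conjugate to `c₃(1,-1)`, to some
`c₂(x)` with `x ∈ 𝔽_q^×`, or to some `c₄(z)` with `z ∈ 𝔽_{q²}^× \ 𝔽_q^×` and
`z^{q+1} ∈ {1} ∪ N` (`N` the non-squares of `𝔽_q^×`). Here `z = x + y·√Δ` with
`x, y ∈ 𝔽_q`, where `sq = √Δ ∈ 𝔽_{q²}` is a fixed square root of the non-square `Δ`. -/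
def glConn (q : ℕ) {F K : Type*} [Field F] [Field K] [Algebra F K] (Δ : F) (sq : K) :
    Set ((Matrix (Fin 2) (Fin 2) F)ˣ) :=
  {g | (∃ u : (Matrix (Fin 2) (Fin 2) F)ˣ,
          (u : Matrix (Fin 2) (Fin 2) F) * c3 F * ((u⁻¹ : (Matrix (Fin 2) (Fin 2) F)ˣ) :
            Matrix (Fin 2) (Fin 2) F) = (g : Matrix (Fin 2) (Fin 2) F)) ∨
       (∃ x : Fˣ, ∃ u : (Matrix (Fin 2) (Fin 2) F)ˣ,
          (u : Matrix (Fin 2) (Fin 2) F) * c2 x * ((u⁻¹ : (Matrix (Fin 2) (Fin 2) F)ˣ) :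
            Matrix (Fin 2) (Fin 2) F) = (g : Matrix (Fin 2) (Fin 2) F)) ∨
       (∃ z : K, ∃ x y : F,
          z = algebraMap F K x + algebraMap F K y * sq ∧
          z ∉ Set.range (algebraMap F K) ∧
          (z ^ (q + 1) = 1 ∨
            ∃ nn : F, (¬ ∃ w : F, w ^ 2 = nn) ∧ z ^ (q + 1) = algebraMap F K nn) ∧
          ∃ u : (Matrix (Fin 2) (Fin 2) F)ˣ,
            (u : Matrix (Fin 2) (Fin 2) F) * c4 Δ x y * ((u⁻¹ : (Matrix (Fin 2) (Fin 2) F)ˣ) :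
              Matrix (Fin 2) (Fin 2) F) = (g : Matrix (Fin 2) (Fin 2) F))}

/-- Extension by zero of a character of `Fˣ` to `F`. -/
noncomputable def extHom {F : Type*} [Field F] (χ : Fˣ →* ℂˣ) : F → ℂ :=
  fun a => if h : a = 0 then 0 else χ (Units.mk0 a h)

/-- The principal series character `I[χ₁,χ₂]` of `GL(2,q)`, via the Frobenius formula
for the character induced from the linear character `[[a,b],[0,d]] ↦ χ₁(a)χ₂(d)` of the
Borel subgroup `B(q)` of upper triangular matrices. -/
noncomputable def indPS {F : Type*} [Field F] [Fintype F] (χ₁ χ₂ : Fˣ →* ℂˣ)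
    (g : (Matrix (Fin 2) (Fin 2) F)ˣ) : ℂ :=
  (({u : (Matrix (Fin 2) (Fin 2) F)ˣ |
      (u : Matrix (Fin 2) (Fin 2) F) 1 0 = 0}.toFinset.card : ℂ))⁻¹ *
    ∑ u : (Matrix (Fin 2) (Fin 2) F)ˣ,
      if ((u⁻¹ * g * u : (Matrix (Fin 2) (Fin 2) F)ˣ) : Matrix (Fin 2) (Fin 2) F) 1 0 = 0 then
        extHom χ₁ (((u⁻¹ * g * u : (Matrix (Fin 2) (Fin 2) F)ˣ) :
            Matrix (Fin 2) (Fin 2) F) 0 0) *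
        extHom χ₂ (((u⁻¹ * g * u : (Matrix (Fin 2) (Fin 2) F)ˣ) :
            Matrix (Fin 2) (Fin 2) F) 1 1)
      else 0

/-!
The set `𝔖` is a union of conjugacy classes, so summing the Frobenius formula over `𝔖` gives
`|GL₂| / |B| · ∑_{g ∈ 𝔖 ∩ B} χ₁(g₁₁) χ₂(g₂₂)`, and `|GL₂| / |B| = q + 1` cancels the prefactor.
An upper triangular matrix has its eigenvalues in `𝔽_q`, so it is never conjugate to an
elliptic `c₄(z)`; comparing traces and determinants, `𝔖 ∩ B` consists of the `q` matrices with
diagonal `(1, -1)`, the `q` with diagonal `(-1, 1)` and the `(q - 1)²` non-diagonal ones with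
diagonal `(a, a)`. Hence `θ = q (χ₁(-1) + χ₂(-1)) + (q - 1) ∑ₐ χ₁(a) χ₂(a)`, and orthogonality
of characters evaluates the last sum. The congruences follow from `χᵢ(-1) = ±1` and `q` odd.
-/

theorem isConj_iff_exists_units_conj {M : Type*} [Monoid M] {a b : M} :
    IsConj a b ↔ ∃ u : Mˣ, ↑u * a * ↑u⁻¹ = b :=
  exists_congr fun u => (Units.mul_inv_eq_iff_eq_mul u).symm

theorem IsConj.eq_of_commute {M : Type*} [Monoid M] {a b : M} (h : IsConj a b)
    (hb : ∀ x, Commute x b) : a = b := by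
  obtain ⟨u, hu⟩ := h
  exact (Units.mul_right_inj u).1 (hu.eq.trans (hb u).symm.eq)

theorem sum_sum_conj_eq_card_nsmul {G M : Type*} [Group G] [Fintype G] [AddCommMonoid M]
    {S : Finset G} (hS : ∀ g ∈ S, ∀ u : G, u⁻¹ * g * u ∈ S) (f : G → M) :
    ∑ g ∈ S, ∑ u, f (u⁻¹ * g * u) = Fintype.card G • ∑ g ∈ S, f g := by
  rw [Finset.sum_comm, ← Finset.card_univ, ← Finset.sum_const]
  refine Finset.sum_congr rfl fun u _ => ?_
  refine Finset.sum_nbij' (fun g => u⁻¹ * g * u) (fun g => u * g * u⁻¹) (fun g hg => hS g hg u)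
    (fun g hg => by simpa using hS g hg u⁻¹) (fun g _ => by group) (fun g _ => by group)
    (fun _ _ => rfl)

theorem ite_or_eq_add {M : Type*} [AddMonoid M] {P Q : Prop} [Decidable P] [Decidable Q]
    (h : ¬ (P ∧ Q)) (x : M) :
    (if P ∨ Q then x else 0) = (if P then x else 0) + (if Q then x else 0) := by
  by_cases hP : P <;> by_cases hQ : Q <;> simp_all

theorem MonoidHom.mul_eq_one_iff_eq_inv' {M N : Type*} [MulOneClass M] [CommGroup N]
    (f g : M →* N) : f * g = 1 ↔ g = f⁻¹ :=
  ⟨fun h => MonoidHom.ext fun x => eq_inv_of_mul_eq_one_right (DFunLike.congr_fun h x),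
    fun h => MonoidHom.ext fun x => by simp [h]⟩

theorem sum_apply_mul_apply_eq_ite {G R : Type*} [Group G] [Fintype G] [CommRing R]
    [IsDomain R] (χ₁ χ₂ : G →* Rˣ) :
    ∑ g, (χ₁ g * χ₂ g : R) = if χ₂ = χ₁⁻¹ then (Fintype.card G : R) else 0 := by
  have hcomp : (Units.coeHom R).comp (χ₁ * χ₂) = 1 ↔ χ₂ = χ₁⁻¹ := by
    rw [← (Units.coeHom R).comp_one, MonoidHom.cancel_left Units.val_injective,
      MonoidHom.mul_eq_one_iff_eq_inv']
  simpa [hcomp] using sum_hom_units ((Units.coeHom R).comp (χ₁ * χ₂))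

theorem MonoidHom.coe_apply_eq_one_or_neg_one {G R : Type*} [Monoid G] [Ring R]
    [NoZeroDivisors R] (χ : G →* Rˣ) {g : G} (hg : g ^ 2 = 1) :
    (χ g : R) = 1 ∨ (χ g : R) = -1 :=
  sq_eq_one_iff.1 (by rw [← Units.val_pow_eq_pow_val, ← map_pow, hg, map_one, Units.val_one])

theorem Int.emod_four_of_odd {q e₁ e₂ s : ℤ} (hq : Odd q) (he₁ : e₁ = 1 ∨ e₁ = -1)
    (he₂ : e₂ = 1 ∨ e₂ = -1) (hs : 4 ∣ s) :
    (q * (e₁ + e₂) + s) % 4 = if e₁ * e₂ = 1 then 2 else 0 := by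
  obtain ⟨k, rfl⟩ := hq
  obtain ⟨t, rfl⟩ := hs
  rcases he₁ with rfl | rfl <;> rcases he₂ with rfl | rfl <;> norm_num <;> omega

theorem exists_int_emod_four_of_odd {G : Type*} [Monoid G] {q : ℕ} (hq : Odd q)
    (χ₁ χ₂ : G →* ℂˣ) {g : G} (hg : g ^ 2 = 1) (P : Prop) [Decidable P] {θ : ℂ}
    (hθ : θ = q * ((χ₁ g : ℂ) + χ₂ g) + if P then ((q : ℂ) - 1) ^ 2 else 0) :
    (χ₁ g * χ₂ g = 1 → ∃ m : ℤ, θ = m ∧ m % 4 = 2) ∧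
      (χ₁ g * χ₂ g = -1 → ∃ m : ℤ, θ = m ∧ m % 4 = 0) := by
  have hsign (χ : G →* ℂˣ) : ∃ e : ℤ, (e = 1 ∨ e = -1) ∧ (χ g : ℂ) = e := by
    rcases χ.coe_apply_eq_one_or_neg_one hg with h | h
    exacts [⟨1, .inl rfl, by simp [h]⟩, ⟨-1, .inr rfl, by simp [h]⟩]
  obtain ⟨e₁, he₁, hχ₁⟩ := hsign χ₁
  obtain ⟨e₂, he₂, hχ₂⟩ := hsign χ₂
  have hprod : ((χ₁ g * χ₂ g : ℂˣ) : ℂ) = ((e₁ * e₂ : ℤ) : ℂ) := by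
    rw [Units.val_mul, hχ₁, hχ₂, Int.cast_mul]
  obtain ⟨s, hs, hθs⟩ : ∃ s : ℤ, 4 ∣ s ∧ θ = ((q * (e₁ + e₂) + s : ℤ) : ℂ) := by
    obtain ⟨k, hk⟩ := hq
    rw [hθ, hχ₁, hχ₂]
    split_ifs
    · exact ⟨4 * k ^ 2, dvd_mul_right 4 _, by rw [hk]; push_cast; ring⟩
    · exact ⟨0, dvd_zero 4, by push_cast; ring⟩
  have hm := Int.emod_four_of_odd (Int.odd_coe_nat q |>.2 hq) he₁ he₂ hs
  refine ⟨fun h => ⟨_, hθs, ?_⟩, fun h => ⟨_, hθs, ?_⟩⟩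
  · have he : ((e₁ * e₂ : ℤ) : ℂ) = 1 := by rw [← hprod, h, Units.val_one]
    rw [hm, if_pos (by exact_mod_cast he)]
  · have he : ((e₁ * e₂ : ℤ) : ℂ) = -1 := by rw [← hprod, h, Units.val_neg, Units.val_one]
    have he' : e₁ * e₂ = -1 := by exact_mod_cast he
    rw [hm, if_neg (by omega)]

namespace Matrix

variable {n R : Type*} [Fintype n] [DecidableEq n] [CommRing R] {A B : Matrix n n R}

theorem trace_eq_of_isConj (h : IsConj A B) : A.trace = B.trace := by
  obtain ⟨u, hu⟩ := isConj_iff_exists_units_conj.1 h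
  rw [← hu, trace_units_conj]

theorem det_eq_of_isConj (h : IsConj A B) : A.det = B.det := by
  obtain ⟨u, hu⟩ := isConj_iff_exists_units_conj.1 h
  rw [← hu, det_units_conj]

theorem isConj_of_mul_eq_mul {u : Matrix n n R} (hu : IsUnit u.det) (h : u * A = B * u) :
    IsConj A B :=
  ⟨nonsingInvUnit u hu, h⟩

end Matrix

section GL2

variable {F : Type*} [Field F]

local notation "M₂" F:max => Matrix (Fin 2) (Fin 2) F

theorem isConj_c3_upperTriangular_iff (h2 : (2 : F) ≠ 0) (a b d : F) :
    IsConj (c3 F) !![a, b; 0, d] ↔ (a = 1 ∧ d = -1) ∨ (a = -1 ∧ d = 1) := by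
  constructor
  · intro h
    have htr := Matrix.trace_eq_of_isConj h
    have hdet := Matrix.det_eq_of_isConj h
    simp only [c3, Matrix.trace_fin_two_of, Matrix.det_fin_two_of] at htr hdet
    have hd : d = -a := by linear_combination -htr
    subst hd
    rcases sq_eq_one_iff.1 (by linear_combination hdet : a ^ 2 = 1) with rfl | rfl
    · exact Or.inl ⟨rfl, rfl⟩
    · exact Or.inr ⟨rfl, neg_neg 1⟩
  · rintro (⟨rfl, rfl⟩ | ⟨rfl, rfl⟩)
    · refine Matrix.isConj_of_mul_eq_mul (u := !![2, -b; 0, 2]) ?_ ?_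
      · simpa [Matrix.det_fin_two_of] using h2
      · simp [c3]; ring
    · refine Matrix.isConj_of_mul_eq_mul (u := !![b, 2; 2, 0]) ?_ ?_
      · simpa [Matrix.det_fin_two_of] using h2
      · simp [c3]; ring

theorem exists_isConj_c2_upperTriangular_iff {a : F} (ha : a ≠ 0) (b d : F) :
    (∃ x : Fˣ, IsConj (c2 x) !![a, b; 0, d]) ↔ a = d ∧ b ≠ 0 := by
  constructor
  · rintro ⟨x, h⟩
    have htr := Matrix.trace_eq_of_isConj h
    have hdet := Matrix.det_eq_of_isConj h
    simp only [c2, Matrix.trace_fin_two_of, Matrix.det_fin_two_of] at htr hdet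
    have had : a = d := by
      have : (a - d) ^ 2 = 0 := by linear_combination -(a + d + 2 * (x : F)) * htr + 4 * hdet
      exact sub_eq_zero.1 (pow_eq_zero_iff two_ne_zero |>.1 this)
    refine ⟨had, ?_⟩
    -- a scalar matrix is conjugate only to itself, and `c2 x` is not scalar
    rintro rfl
    subst had
    have hscalar : !![a, 0; 0, a] = Matrix.scalar (Fin 2) a := by
      ext i j; fin_cases i <;> fin_cases j <;> rfl
    have := congrFun (congrFun (h.eq_of_commute fun y => ?_) 0) 1
    · simp [c2] at this
    · rw [hscalar]; exact (Matrix.scalar_commute a (fun _ => Commute.all _ _) y).symm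
  · rintro ⟨rfl, hb⟩
    refine ⟨Units.mk0 a ha, Matrix.isConj_of_mul_eq_mul (u := !![b, 0; 0, 1]) ?_ ?_⟩
    · simpa [Matrix.det_fin_two_of] using hb
    · simp [c2]; ring

theorem not_isConj_c4_upperTriangular (h2 : (2 : F) ≠ 0) {Δ : F} (hΔ : ¬ ∃ m : F, m ^ 2 = Δ)
    {x y : F} (hy : y ≠ 0) (a b d : F) : ¬ IsConj (c4 Δ x y) !![a, b; 0, d] := by
  intro h
  have htr := Matrix.trace_eq_of_isConj h
  have hdet := Matrix.det_eq_of_isConj h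
  simp only [c4, Matrix.trace_fin_two_of, Matrix.det_fin_two_of] at htr hdet
  -- `(a - d)² = tr² - 4 det = 4 Δ y²`
  refine hΔ ⟨(a - d) / (2 * y), ?_⟩
  rw [div_pow, div_eq_iff (pow_ne_zero 2 (mul_ne_zero h2 hy))]
  linear_combination -(a + d + 2 * x) * htr + 4 * hdet

theorem mem_glConn_iff_isConj {K : Type*} [Field K] [Algebra F K] (q : ℕ) (Δ : F) (sq : K)
    (g : (M₂ F)ˣ) :
    g ∈ glConn q Δ sq ↔ IsConj (c3 F) (g : M₂ F) ∨ (∃ x : Fˣ, IsConj (c2 x) (g : M₂ F)) ∨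
      ∃ z : K, ∃ x y : F, z = algebraMap F K x + algebraMap F K y * sq ∧
        z ∉ Set.range (algebraMap F K) ∧
        (z ^ (q + 1) = 1 ∨
          ∃ nn : F, (¬ ∃ w : F, w ^ 2 = nn) ∧ z ^ (q + 1) = algebraMap F K nn) ∧
        IsConj (c4 Δ x y) (g : M₂ F) := by
  simp only [glConn, Set.mem_ofPred_eq, isConj_iff_exists_units_conj]

theorem conj_mem_glConn {K : Type*} [Field K] [Algebra F K] {q : ℕ} {Δ : F} {sq : K}
    {g : (M₂ F)ˣ} (hg : g ∈ glConn q Δ sq) (u : (M₂ F)ˣ) : u⁻¹ * g * u ∈ glConn q Δ sq := by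
  have hconj : IsConj (g : M₂ F) ↑(u⁻¹ * g * u) :=
    (Units.coeHom (M₂ F)).map_isConj (isConj_iff.2 ⟨u⁻¹, rfl⟩)
  rw [mem_glConn_iff_isConj] at hg ⊢
  rcases hg with h | ⟨x, h⟩ | ⟨z, x, y, hz, hzF, hnorm, h⟩
  · exact Or.inl (h.trans hconj)
  · exact Or.inr (Or.inl ⟨x, h.trans hconj⟩)
  · exact Or.inr (Or.inr ⟨z, x, y, hz, hzF, hnorm, h.trans hconj⟩)

noncomputable def upperTriangularUnit (a d : Fˣ) (b : F) : (M₂ F)ˣ :=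
  Matrix.nonsingInvUnit !![(a : F), b; 0, (d : F)] (by simp [Matrix.det_fin_two_of])

@[simp] theorem coe_upperTriangularUnit (a d : Fˣ) (b : F) :
    (upperTriangularUnit a d b : M₂ F) = !![(a : F), b; 0, (d : F)] := rfl

theorem upperTriangularUnit_injective :
    Function.Injective fun p : Fˣ × Fˣ × F => upperTriangularUnit p.1 p.2.1 p.2.2 := by
  rintro ⟨a, d, b⟩ ⟨a', d', b'⟩ h
  have h' := congrArg Units.val h
  simp only [coe_upperTriangularUnit] at h'
  have h00 := congrFun (congrFun h' 0) 0
  have h01 := congrFun (congrFun h' 0) 1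
  have h11 := congrFun (congrFun h' 1) 1
  simp only [Matrix.of_apply, Matrix.cons_val', Matrix.cons_val_zero, Matrix.cons_val_one,
    Matrix.empty_val', Matrix.cons_val_fin_one] at h00 h01 h11
  simp [Units.ext h00, Units.ext h11, h01]

theorem exists_upperTriangularUnit_eq {g : (M₂ F)ˣ} (hg : (g : M₂ F) 1 0 = 0) :
    ∃ p : Fˣ × Fˣ × F, upperTriangularUnit p.1 p.2.1 p.2.2 = g := by
  have hdet : (g : M₂ F) 0 0 * (g : M₂ F) 1 1 ≠ 0 := by
    simpa [Matrix.det_fin_two, hg] using g.isUnit.map Matrix.detMonoidHom |>.ne_zero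
  refine ⟨⟨Units.mk0 _ (left_ne_zero_of_mul hdet), Units.mk0 _ (right_ne_zero_of_mul hdet),
    (g : M₂ F) 0 1⟩, Units.ext ?_⟩
  conv_rhs => rw [Matrix.eta_fin_two (g : M₂ F), hg]
  rfl

theorem upperTriangularUnit_mem_glConn_iff {K : Type*} [Field K] [Algebra F K] (q : ℕ)
    (h2 : (2 : F) ≠ 0) {Δ : F} (hΔ : ¬ ∃ m : F, m ^ 2 = Δ) (sq : K) (a d : Fˣ) (b : F) :
    upperTriangularUnit a d b ∈ glConn q Δ sq ↔
      (a = 1 ∧ d = -1) ∨ (a = -1 ∧ d = 1) ∨ (a = d ∧ b ≠ 0) := by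
  rw [mem_glConn_iff_isConj, coe_upperTriangularUnit, isConj_c3_upperTriangular_iff h2,
    exists_isConj_c2_upperTriangular_iff a.ne_zero, ← or_assoc, or_iff_left, or_assoc]
  · simp only [Units.ext_iff, Units.val_one, Units.val_neg]
  · rintro ⟨z, x, y, rfl, hzF, -, h⟩
    have hy : y ≠ 0 := by
      rintro rfl
      exact hzF ⟨x, by simp⟩
    exact not_isConj_c4_upperTriangular h2 hΔ hy _ _ _ h

theorem extHom_coe (χ : Fˣ →* ℂˣ) (a : Fˣ) : extHom χ (a : F) = χ a := by
  simp [extHom]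

noncomputable def borelChar (χ₁ χ₂ : Fˣ →* ℂˣ) (g : (M₂ F)ˣ) : ℂ :=
  if (g : M₂ F) 1 0 = 0 then extHom χ₁ ((g : M₂ F) 0 0) * extHom χ₂ ((g : M₂ F) 1 1) else 0

theorem borelChar_upperTriangularUnit (χ₁ χ₂ : Fˣ →* ℂˣ) (a d : Fˣ) (b : F) :
    borelChar χ₁ χ₂ (upperTriangularUnit a d b) = χ₁ a * χ₂ d := by
  simp [borelChar, extHom_coe]

theorem sum_borelChar_eq_sum_upperTriangularUnit [Fintype F] (χ₁ χ₂ : Fˣ →* ℂˣ)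
    (S : Finset (M₂ F)ˣ) :
    ∑ g ∈ S, borelChar χ₁ χ₂ g =
      ∑ p : Fˣ × Fˣ × F, if upperTriangularUnit p.1 p.2.1 p.2.2 ∈ S then
        (χ₁ p.1 * χ₂ p.2.1 : ℂ) else 0 := by
  rw [← Finset.univ_inter S, ← Finset.sum_ite_mem]
  refine (Fintype.sum_of_injective _ upperTriangularUnit_injective _ _ (fun g hg => ?_)
    (fun p => by rw [Finset.univ_inter, borelChar_upperTriangularUnit])).symm
  have hg10 : (g : M₂ F) 1 0 ≠ 0 := fun h => hg (exists_upperTriangularUnit_eq h)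
  simp [borelChar, hg10]

theorem card_upperTriangular [Fintype F] :
    {u : (M₂ F)ˣ | (u : M₂ F) 1 0 = 0}.toFinset.card =
      (Fintype.card F - 1) ^ 2 * Fintype.card F := by
  have h : {u : (M₂ F)ˣ | (u : M₂ F) 1 0 = 0}.toFinset =
      Finset.univ.image fun p : Fˣ × Fˣ × F => upperTriangularUnit p.1 p.2.1 p.2.2 := by
    ext g
    simp only [Set.mem_toFinset, Set.mem_ofPred_eq, Finset.mem_image, Finset.mem_univ, true_and]
    exact ⟨exists_upperTriangularUnit_eq, fun ⟨p, hp⟩ => hp ▸ rfl⟩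
  rw [h, Finset.card_image_of_injective _ upperTriangularUnit_injective]
  simp [Fintype.card_units, sq, mul_assoc]

theorem card_units_matrix_fin_two [Fintype F] :
    Fintype.card (M₂ F)ˣ = (Fintype.card F + 1) * ((Fintype.card F - 1) ^ 2 * Fintype.card F) := by
  have h := Matrix.card_GL_field (𝔽 := F) 2
  rw [Nat.card_eq_fintype_card] at h
  obtain ⟨m, hm⟩ : ∃ m, Fintype.card F = m + 1 := Nat.exists_eq_add_one.2 Fintype.card_pos
  rw [show Fintype.card (M₂ F)ˣ = Fintype.card (GL (Fin 2) F) from rfl, h, hm]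
  simp only [Fin.prod_univ_two, Fin.val_zero, Fin.val_one, pow_zero, pow_one, Nat.add_sub_cancel]
  rw [Nat.sub_eq_of_eq_add (by ring : (m + 1) ^ 2 = m * (m + 2) + 1),
    Nat.sub_eq_of_eq_add (by ring : (m + 1) ^ 2 = (m + 1) * m + (m + 1))]
  ring

theorem sum_indPS_eq_mul_sum_borelChar [Fintype F] (χ₁ χ₂ : Fˣ →* ℂˣ) {S : Finset (M₂ F)ˣ}
    (hS : ∀ g ∈ S, ∀ u, u⁻¹ * g * u ∈ S) :
    ∑ g ∈ S, indPS χ₁ χ₂ g = (Fintype.card F + 1) * ∑ g ∈ S, borelChar χ₁ χ₂ g := by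
  have hB : (((Fintype.card F - 1) ^ 2 * Fintype.card F : ℕ) : ℂ) ≠ 0 := by
    have := Fintype.one_lt_card (α := F)
    exact Nat.cast_ne_zero.2 (mul_ne_zero (pow_ne_zero 2 (by omega)) (by omega))
  have hind : ∀ g, indPS χ₁ χ₂ g =
      ({u : (M₂ F)ˣ | (u : M₂ F) 1 0 = 0}.toFinset.card : ℂ)⁻¹ *
        ∑ u, borelChar χ₁ χ₂ (u⁻¹ * g * u) := fun _ => rfl
  simp only [hind, ← Finset.mul_sum]
  rw [sum_sum_conj_eq_card_nsmul hS, card_upperTriangular, card_units_matrix_fin_two,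
    nsmul_eq_mul]
  generalize (Fintype.card F - 1) ^ 2 * Fintype.card F = N at hB ⊢
  push_cast
  field_simp

theorem sum_borelChar_glConn [Fintype F] {K : Type*} [Field K] [Algebra F K] (q : ℕ)
    (h2 : (2 : F) ≠ 0) {Δ : F} (hΔ : ¬ ∃ m : F, m ^ 2 = Δ) (sq : K) (χ₁ χ₂ : Fˣ →* ℂˣ) :
    ∑ g ∈ (glConn q Δ sq).toFinset, borelChar χ₁ χ₂ g =
      Fintype.card F * ((χ₁ (-1) : ℂ) + χ₂ (-1)) +
        (Fintype.card F - 1) * ∑ a : Fˣ, (χ₁ a * χ₂ a : ℂ) := by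
  have hne : (1 : Fˣ) ≠ -1 := by
    intro h
    apply h2
    simpa [one_add_one_eq_two] using congrArg (fun u : Fˣ => (u : F) + 1) h
  rw [sum_borelChar_eq_sum_upperTriangularUnit]
  simp only [Set.mem_toFinset, upperTriangularUnit_mem_glConn_iff q h2 hΔ]
  have hsplit : ∀ a d : Fˣ, ∀ b : F,
      (if (a = 1 ∧ d = -1) ∨ (a = -1 ∧ d = 1) ∨ (a = d ∧ b ≠ 0) then (χ₁ a * χ₂ d : ℂ) else 0) =
      (if a = 1 ∧ d = -1 then (χ₁ a * χ₂ d : ℂ) else 0) +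
      (if a = -1 ∧ d = 1 then (χ₁ a * χ₂ d : ℂ) else 0) +
      (if a = d ∧ b ≠ 0 then (χ₁ a * χ₂ d : ℂ) else 0) := by
    intro a d b
    rw [ite_or_eq_add, ite_or_eq_add, add_assoc]
    · rintro ⟨⟨rfl, rfl⟩, h, -⟩
      exact hne h.symm
    · rintro ⟨⟨rfl, rfl⟩, ⟨h, -⟩ | ⟨h, -⟩⟩ <;> exact hne h
  simp only [hsplit, Finset.sum_add_distrib, Fintype.sum_prod_type, ite_and]
  simp [Finset.sum_ite, Finset.filter_ne', Finset.mul_sum, Nat.cast_pred Fintype.card_pos]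
  ring

theorem sum_indPS_glConn [Fintype F] {K : Type*} [Field K] [Algebra F K] (q : ℕ)
    (h2 : (2 : F) ≠ 0) {Δ : F} (hΔ : ¬ ∃ m : F, m ^ 2 = Δ) (sq : K) (χ₁ χ₂ : Fˣ →* ℂˣ) :
    ∑ g ∈ (glConn q Δ sq).toFinset, indPS χ₁ χ₂ g =
      (Fintype.card F + 1) * (Fintype.card F * ((χ₁ (-1) : ℂ) + χ₂ (-1)) +
        if χ₂ = χ₁⁻¹ then ((Fintype.card F : ℂ) - 1) ^ 2 else 0) := by
  have hconj : ∀ g ∈ (glConn q Δ sq).toFinset, ∀ u, u⁻¹ * g * u ∈ (glConn q Δ sq).toFinset :=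
    fun g hg u => Set.mem_toFinset.2 (conj_mem_glConn (Set.mem_toFinset.1 hg) u)
  rw [sum_indPS_eq_mul_sum_borelChar χ₁ χ₂ hconj, sum_borelChar_glConn q h2 hΔ sq,
    sum_apply_mul_apply_eq_ite, Fintype.card_units, Nat.cast_pred Fintype.card_pos]
  split_ifs <;> ring

theorem FiniteField.two_ne_zero_of_odd_card [Fintype F] (h : Odd (Fintype.card F)) :
    (2 : F) ≠ 0 :=
  Ring.two_ne_zero fun hchar => by
    have := FiniteField.even_card_iff_char_two.1 hchar
    have := Nat.odd_iff.1 h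
    omega

end GL2

theorem stmt_12_general (q : ℕ) (hodd : Odd q)
    (F K : Type) [Field F] [Field K] [Fintype F] [Algebra F K]
    (hF : Fintype.card F = q)
    (Δ : F) (hΔ : ¬ ∃ m : F, m ^ 2 = Δ) (sq : K)
    (χ₁ χ₂ : Fˣ →* ℂˣ) :
    ∀ θ : ℂ,
      θ = (1 / ((q : ℂ) + 1)) * ∑ g ∈ (glConn q Δ sq).toFinset, indPS χ₁ χ₂ g →
      ((χ₂ = χ₁⁻¹ →
        θ = (q : ℂ) * (((χ₁ (-1) : ℂˣ) : ℂ) + ((χ₂ (-1) : ℂˣ) : ℂ)) + ((q : ℂ) - 1) ^ 2) ∧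
      (χ₂ ≠ χ₁⁻¹ →
        θ = (q : ℂ) * (((χ₁ (-1) : ℂˣ) : ℂ) + ((χ₂ (-1) : ℂˣ) : ℂ))) ∧
      (χ₁ (-1) * χ₂ (-1) = 1 → ∃ m : ℤ, θ = (m : ℂ) ∧ m % 4 = 2) ∧
      (χ₁ (-1) * χ₂ (-1) = -1 → ∃ m : ℤ, θ = (m : ℂ) ∧ m % 4 = 0)) := by
  intro θ hθ
  subst hF
  rw [sum_indPS_glConn _ (FiniteField.two_ne_zero_of_odd_card hodd) hΔ, ← mul_assoc,
    one_div_mul_cancel (Nat.cast_add_one_ne_zero _), one_mul] at hθ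
  exact ⟨fun h => by rw [hθ, if_pos h], fun h => by rw [hθ, if_neg h, add_zero],
    exists_int_emod_four_of_odd hodd χ₁ χ₂ (neg_one_sq (R := Fˣ)) _ hθ⟩

/-- the eigenvalues of `Cay(GL(2,q), 𝔖)` indexed by the principal series
characters `I[χ₁,χ₂]`. -/
theorem stmt_12 (q p n : ℕ) (hp : p.Prime) (hq : q = p ^ n) (hn : n ≠ 0) (hodd : Odd q)
    (F K : Type) [Field F] [Field K] [Fintype F] [Fintype K] [Algebra F K]
    (hF : Fintype.card F = q) (hK : Fintype.card K = q ^ 2)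
    (Δ : F) (hΔ : ¬ ∃ m : F, m ^ 2 = Δ) (sq : K) (hsq : sq ^ 2 = algebraMap F K Δ)
    (χ₁ χ₂ : Fˣ →* ℂˣ) (hχ : χ₁ ≠ χ₂) :
    ∀ θ : ℂ,
      θ = (1 / ((q : ℂ) + 1)) * ∑ g ∈ (glConn q Δ sq).toFinset, indPS χ₁ χ₂ g →
      ((χ₂ = χ₁⁻¹ →
        θ = (q : ℂ) * (((χ₁ (-1) : ℂˣ) : ℂ) + ((χ₂ (-1) : ℂˣ) : ℂ)) + ((q : ℂ) - 1) ^ 2) ∧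
      (χ₂ ≠ χ₁⁻¹ →
        θ = (q : ℂ) * (((χ₁ (-1) : ℂˣ) : ℂ) + ((χ₂ (-1) : ℂˣ) : ℂ))) ∧
      (χ₁ (-1) * χ₂ (-1) = 1 → ∃ m : ℤ, θ = (m : ℂ) ∧ m % 4 = 2) ∧
      (χ₁ (-1) * χ₂ (-1) = -1 → ∃ m : ℤ, θ = (m : ℂ) ∧ m % 4 = 0)) :=
  stmt_12_general q hodd F K hF Δ hΔ sq χ₁ χ₂
end

section
/- Let q be an odd prime power, E the unique subgroup of 𝔽_{q²}^× of order q+1, Q its unique index-2 subgroup, R = E \ Q, and T' = {z ∈ 𝔽_{q²}^× \ E : z^{1−q} ∈ {1} ∪ R}. For every nontrivial group homomorphism λ: E → ℂ^×, one has ∑_{z ∈ T'} λ(z^{1−q}) = (q−3) − (q−1)·∑_{x ∈ Q} λ(x). -/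
/-!
The group `𝔽_{q²}^×` is cyclic of order `(q + 1)(q - 1)`, so `z ↦ z^{1-q}` maps it onto `E`
with all fibres of size `q - 1`, and on `E` it is `z ↦ z²`, with values in `Q`. Hence `T'` is
the disjoint union of the `z ∉ E` with `z^{1-q} = 1`, of which there are `(q - 1) - 2` (the
kernel minus `±1`), and of all `z` with `z^{1-q} ∈ R`. The latter contribute `(q - 1) ∑_R λ`,
which is `-(q - 1) ∑_Q λ` because a nontrivial character sums to zero over `E`.
-/

open scoped Classical
open Finset

section Cyclic

variable {G : Type*} [CommGroup G] [Finite G] [IsCyclic G]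

theorem IsCyclic.mem_iff_pow_card_eq_one {H : Subgroup G} {x : G} :
    x ∈ H ↔ x ^ Nat.card H = 1 := by
  have hH : H = (powMonoidHom (Nat.card H) : G →* G).ker := by
    refine Subgroup.eq_of_le_of_card_ge (fun y hy => ?_) ?_
    · exact congrArg Subtype.val (pow_card_eq_one' (G := H) (x := ⟨y, hy⟩))
    · rw [IsCyclic.card_powMonoidHom_ker, Nat.gcd_eq_right (Subgroup.card_subgroup_dvd_card H)]
  conv_lhs => rw [hH]
  rfl

theorem IsCyclic.card_filter_pow_eq_one [Fintype G] {d : ℕ} (hd : d ∣ Nat.card G) :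
    #{x : G | x ^ d = 1} = d := by
  have hker := IsCyclic.card_powMonoidHom_ker G d
  rw [Nat.gcd_eq_right hd] at hker
  rw [← Fintype.card_subtype, ← Nat.card_eq_fintype_card]
  exact hker

end Cyclic

theorem Nat.sq_sub_one_eq_add_one_mul_sub_one (q : ℕ) : q ^ 2 - 1 = (q + 1) * (q - 1) := by
  rw [← Nat.sq_sub_sq, one_pow]

theorem MonoidHom.sum_comp_of_surjective {G H M : Type*} [Group G] [Group H] [Fintype G]
    [Fintype H] [AddCommMonoid M] (f : G →* H) (hf : Function.Surjective f) (F : H → M) :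
    ∑ g, F (f g) = Nat.card f.ker • ∑ h, F h := by
  rw [sum_comp, image_univ_of_surjective hf, smul_sum]
  refine sum_congr rfl fun h _ => ?_
  rw [card_fiber_eq_of_mem_range f (hf h) ⟨1, map_one f⟩, Nat.card_eq_fintype_card,
    Fintype.card_subtype]
  simp only [MonoidHom.mem_ker]

theorem Subgroup.sum_filter_notMem_eq_neg_sum {R G : Type*} [CommRing R] [IsDomain R] [Group G]
    {E Q : Subgroup G} [Fintype E] [Fintype Q] (hQE : Q ≤ E) {lam : E →* Rˣ}
    (hlam : lam ≠ 1) :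
    ∑ e : E with ↑e ∉ Q, (lam e : R) = -∑ x : Q, (lam (Subgroup.inclusion hQE x) : R) := by
  have hsum : ∑ e : E, (lam e : R) = 0 := sum_hom_units_eq_zero ((Units.coeHom R).comp lam)
    fun h => hlam (MonoidHom.ext fun e => Units.ext (DFunLike.congr_fun h e))
  have hQsum : ∑ e : E with ↑e ∈ Q, (lam e : R) =
      ∑ x : Q, (lam (Subgroup.inclusion hQE x) : R) :=
    (sum_subtype _ (fun _ => by simp [Subgroup.mem_subgroupOf]) _).trans
      (Fintype.sum_equiv (Subgroup.subgroupOfEquivOfLe hQE).toEquiv _ _ fun _ => rfl)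
  rw [← sum_filter_add_sum_filter_not univ (fun e : E => (e : G) ∈ Q), hQsum] at hsum
  exact eq_neg_of_add_eq_zero_right hsum

section OneSubPow

variable {G : Type*} [CommGroup G] {q : ℕ}

theorem mul_inv_pow_eq_one_iff (hq : q ≠ 0) {z : G} :
    z * (z ^ q)⁻¹ = 1 ↔ z ^ (q - 1) = 1 := by
  rw [mul_inv_eq_one, ← pow_sub_one_mul hq, eq_comm, mul_eq_right]

variable [Finite G]

theorem one_lt_of_card_eq_sq_sub_one (hG : Nat.card G = q ^ 2 - 1) : 1 < q := by
  have := hG ▸ (Nat.card_pos : 0 < Nat.card G)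
  by_contra! h
  interval_cases q <;> simp at this

variable [IsCyclic G]

theorem mul_inv_pow_mem_of_mem {E Q : Subgroup G} (hE : Nat.card E = q + 1)
    (hQ : Nat.card Q * 2 = q + 1) {z : G} (hz : z ∈ E) : z * (z ^ q)⁻¹ ∈ Q := by
  rw [IsCyclic.mem_iff_pow_card_eq_one, hE] at hz
  have hzq : (z ^ q)⁻¹ = z := inv_eq_of_mul_eq_one_left (by rwa [← pow_succ'])
  rw [hzq, IsCyclic.mem_iff_pow_card_eq_one, ← sq, ← pow_mul, mul_comm, hQ, hz]

theorem mul_inv_pow_eq_one_and_mem_iff (hodd : Odd q) {E : Subgroup G}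
    (hE : Nat.card E = q + 1) {z : G} : z * (z ^ q)⁻¹ = 1 ∧ z ∈ E ↔ z ^ 2 = 1 := by
  obtain ⟨k, hk⟩ : 2 ∣ q - 1 := (Nat.Odd.sub_odd hodd odd_one).two_dvd
  have hq := hodd.pos
  rw [mul_inv_pow_eq_one_iff (by omega), IsCyclic.mem_iff_pow_card_eq_one, hE,
    show q + 1 = q - 1 + 2 by omega, pow_add]
  constructor
  · rintro ⟨h1, h2⟩
    rwa [h1, one_mul] at h2
  · intro h
    have h1 : z ^ (q - 1) = 1 := by rw [hk, pow_mul, h, one_pow]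
    simp [h1, h]

theorem card_filter_mul_inv_pow_eq_one [Fintype G] (hG : Nat.card G = q ^ 2 - 1) :
    #{z : G | z * (z ^ q)⁻¹ = 1} = q - 1 := by
  have hq := one_lt_of_card_eq_sq_sub_one hG
  rw [filter_congr fun z _ => mul_inv_pow_eq_one_iff (by omega)]
  exact IsCyclic.card_filter_pow_eq_one
    ⟨q + 1, by rw [hG, Nat.sq_sub_one_eq_add_one_mul_sub_one, mul_comm]⟩

theorem card_filter_mul_inv_pow_eq_one_and_notMem [Fintype G] (hG : Nat.card G = q ^ 2 - 1)
    (hodd : Odd q) {E : Subgroup G} (hE : Nat.card E = q + 1) :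
    #{z : G | z * (z ^ q)⁻¹ = 1 ∧ z ∉ E} + 2 = q - 1 := by
  have hker := card_filter_mul_inv_pow_eq_one hG
  have hkerE : #{z : G | z * (z ^ q)⁻¹ = 1 ∧ z ∈ E} = 2 := by
    rw [filter_congr fun z _ => mul_inv_pow_eq_one_and_mem_iff hodd hE]
    refine IsCyclic.card_filter_pow_eq_one ?_
    rw [hG, Nat.sq_sub_one_eq_add_one_mul_sub_one]
    exact dvd_mul_of_dvd_left hodd.add_one.two_dvd _
  have hsplit := card_filter_add_card_filter_not (s := {z : G | z * (z ^ q)⁻¹ = 1})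
    (fun z => z ∈ E)
  rw [filter_filter, filter_filter, hker, hkerE] at hsplit
  omega

theorem sum_comp_mul_inv_pow [Fintype G] {M : Type*} [AddCommMonoid M]
    (hG : Nat.card G = q ^ 2 - 1) {E : Subgroup G} (hE : Nat.card E = q + 1)
    (nu : G → E) (hnu : ∀ z : G, (nu z : G) = z * (z ^ q)⁻¹) (F : E → M) :
    ∑ z, F (nu z) = (q - 1) • ∑ e, F e := by
  have hq := one_lt_of_card_eq_sq_sub_one hG
  let ν : G →* E := MonoidHom.mk' nu fun a b => Subtype.ext <| by
    simp only [Subgroup.coe_mul, hnu, mul_pow, mul_inv]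
    exact mul_mul_mul_comm ..
  have hker : Nat.card ν.ker = q - 1 := by
    rw [← card_filter_mul_inv_pow_eq_one hG, Nat.card_eq_fintype_card, Fintype.card_subtype]
    simp only [MonoidHom.mem_ker, Subtype.ext_iff, MonoidHom.mk'_apply, hnu, Subgroup.coe_one, ν]
  have hsurj : Function.Surjective ν := ν.surjective_of_card_ker_le_div <| by
    rw [hker, hG, hE, Nat.sq_sub_one_eq_add_one_mul_sub_one, Nat.mul_div_cancel_left _ (by omega)]
  exact hker ▸ ν.sum_comp_of_surjective hsurj F

theorem sum_char_mul_inv_pow_eq [Fintype G] (hG : Nat.card G = q ^ 2 - 1) (hodd : Odd q)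
    {E Q : Subgroup G} (hE : Nat.card E = q + 1) (hQE : Q ≤ E) (hQ : Nat.card Q * 2 = q + 1)
    (nu : G → E) (hnu : ∀ z : G, (nu z : G) = z * (z ^ q)⁻¹)
    (lam : E →* ℂˣ) (hlam : lam ≠ 1) :
    ∑ z ∈ univ.filter (fun z : G => z ∉ E ∧
        (z * (z ^ q)⁻¹ = 1 ∨ (z * (z ^ q)⁻¹ ∈ E ∧ z * (z ^ q)⁻¹ ∉ Q))),
      ((lam (nu z) : ℂˣ) : ℂ)
    = ((q : ℂ) - 3) - ((q : ℂ) - 1) *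
        ∑ x : Q, ((lam (Subgroup.inclusion hQE x) : ℂˣ) : ℂ) := by
  have hq := one_lt_of_card_eq_sq_sub_one hG
  set A : Finset G := {z : G | z * (z ^ q)⁻¹ = 1 ∧ z ∉ E}
  set B : Finset G := {z : G | (nu z : G) ∉ Q}
  have hT : univ.filter (fun z : G => z ∉ E ∧
      (z * (z ^ q)⁻¹ = 1 ∨ (z * (z ^ q)⁻¹ ∈ E ∧ z * (z ^ q)⁻¹ ∉ Q))) =
      A ∪ B := by
    ext z
    have hzE : z * (z ^ q)⁻¹ ∈ E := hnu z ▸ (nu z).2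
    have hzQ := mt (mul_inv_pow_mem_of_mem hE hQ (z := z))
    simp only [A, B, mem_union, mem_filter, mem_univ, true_and, hnu]
    tauto
  have hAB : Disjoint A B := disjoint_filter.2 fun z _ h1 h2 => h2 (hnu z ▸ h1.1 ▸ Q.one_mem)
  have hsumA : ∑ z ∈ A, ((lam (nu z) : ℂˣ) : ℂ) = q - 3 := by
    rw [sum_congr rfl fun z hz => ?_, sum_const, nsmul_one]
    · have hcard := congrArg (Nat.cast (R := ℂ))
        (card_filter_mul_inv_pow_eq_one_and_notMem hG hodd hE)
      push_cast [Nat.cast_sub hq.le] at hcard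
      linear_combination hcard
    · rw [show nu z = 1 from Subtype.ext ((hnu z).trans (mem_filter.1 hz).2.1), map_one,
        Units.val_one]
  have hsumB : ∑ z ∈ B, ((lam (nu z) : ℂˣ) : ℂ) =
      (q - 1) * ∑ e : E with ↑e ∉ Q, ((lam e : ℂˣ) : ℂ) := by
    rw [sum_filter, sum_filter,
      sum_comp_mul_inv_pow hG hE nu hnu fun e => if ↑e ∉ Q then ((lam e : ℂˣ) : ℂ) else 0,
      nsmul_eq_mul, Nat.cast_sub hq.le, Nat.cast_one]
  rw [hT, sum_union hAB, hsumA, hsumB, Subgroup.sum_filter_notMem_eq_neg_sum hQE hlam]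
  ring

end OneSubPow

theorem stmt_14_general (q : ℕ) (hodd : Odd q)
    (K : Type) [Field K] [Fintype K] (hK : Fintype.card K = q ^ 2)
    (E Q : Subgroup Kˣ) (hE : Nat.card E = q + 1) (hQE : Q ≤ E)
    (hQ : Nat.card Q * 2 = q + 1)
    (nu : Kˣ → ↥E) (hnu : ∀ z : Kˣ, (nu z : Kˣ) = z * (z ^ q)⁻¹)
    (lam : ↥E →* ℂˣ) (hlam : lam ≠ 1) :
    ∑ z ∈ Finset.univ.filter (fun z : Kˣ => z ∉ E ∧
        (z * (z ^ q)⁻¹ = 1 ∨ (z * (z ^ q)⁻¹ ∈ E ∧ z * (z ^ q)⁻¹ ∉ Q))),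
      ((lam (nu z) : ℂˣ) : ℂ)
    = ((q : ℂ) - 3) - ((q : ℂ) - 1) *
        ∑ x : ↥Q, ((lam (Subgroup.inclusion hQE x) : ℂˣ) : ℂ) := by
  have hG : Nat.card Kˣ = q ^ 2 - 1 := by rw [Nat.card_eq_fintype_card, Fintype.card_units, hK]
  convert sum_char_mul_inv_pow_eq hG hodd hE hQE hQ nu hnu lam hlam

/-- character sum of `λ(z^{1-q})` over
`T' = {z ∈ 𝔽_{q²}^× \ E : z^{1-q} ∈ {1} ∪ R}`. -/
theorem stmt_14 (q p n : ℕ) (hp : p.Prime) (hq : q = p ^ n) (hn : n ≠ 0) (hodd : Odd q)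
    (K : Type) [Field K] [Fintype K] (hK : Fintype.card K = q ^ 2)
    (E Q : Subgroup Kˣ) (hE : Nat.card E = q + 1) (hQE : Q ≤ E)
    (hQ : Nat.card Q * 2 = q + 1)
    (nu : Kˣ → ↥E) (hnu : ∀ z : Kˣ, (nu z : Kˣ) = z * (z ^ q)⁻¹)
    (lam : ↥E →* ℂˣ) (hlam : lam ≠ 1) :
    ∑ z ∈ Finset.univ.filter (fun z : Kˣ => z ∉ E ∧
        (z * (z ^ q)⁻¹ = 1 ∨ (z * (z ^ q)⁻¹ ∈ E ∧ z * (z ^ q)⁻¹ ∉ Q))),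
      ((lam (nu z) : ℂˣ) : ℂ)
    = ((q : ℂ) - 3) - ((q : ℂ) - 1) *
        ∑ x : ↥Q, ((lam (Subgroup.inclusion hQE x) : ℂˣ) : ℂ) :=
  stmt_14_general q hodd K hK E Q hE hQE hQ nu hnu lam hlam
end

section
/- Let q be an odd prime power, E the unique subgroup of 𝔽_{q²}^× of order q+1, Q its unique index-2 subgroup, R = E \ Q, and T' = {z ∈ 𝔽_{q²}^× \ E : z^{1−q} ∈ {1} ∪ R}. For every group homomorphism μ: 𝔽_{q²}^× → ℂ^× such that μ ≠ μ^{−q} (i.e., μ(z) ≠ μ(z^q)⁻¹ for some z ∈ 𝔽_{q²}^×, equivalently μ is nontrivial on 𝔽_q^×), one has ∑_{z ∈ T'} μ(z) = −(1 + μ(−1)). -/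
open scoped Classical

private lemma shift_sum {G : Type*} [CommGroup G] (mu : G →* ℂˣ) (t : G)
    (ht : mu t ≠ 1) (S : Finset G) (hS : ∀ z, z ∈ S ↔ t * z ∈ S) :
    ∑ z ∈ S, ((mu z : ℂˣ) : ℂ) = 0 := by
  have h1 : ∑ z ∈ S, ((mu (t * z) : ℂˣ) : ℂ) = ∑ z ∈ S, ((mu z : ℂˣ) : ℂ) :=
    Finset.sum_equiv (Equiv.mulLeft t) (fun i => hS i) (fun i _ => rfl)
  have h2 : ∑ z ∈ S, ((mu (t * z) : ℂˣ) : ℂ)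
      = ((mu t : ℂˣ) : ℂ) * ∑ z ∈ S, ((mu z : ℂˣ) : ℂ) := by
    rw [Finset.mul_sum]
    exact Finset.sum_congr rfl fun z _ => by simp [map_mul]
  have htC : ((mu t : ℂˣ) : ℂ) ≠ 1 := fun h => ht (Units.ext (by simpa using h))
  rw [h2] at h1
  have h3 : (((mu t : ℂˣ) : ℂ) - 1) * ∑ z ∈ S, ((mu z : ℂˣ) : ℂ) = 0 := by
    linear_combination h1
  rcases mul_eq_zero.1 h3 with h | h
  · exact absurd (by linear_combination h) htC
  · exact h

/-- character sum of `μ(z)` over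
`T' = {z ∈ 𝔽_{q²}^× \ E : z^{1-q} ∈ {1} ∪ R}` for `μ ≠ μ^{-q}`. -/
theorem stmt_15 (q p n : ℕ) (hp : p.Prime) (hq : q = p ^ n) (hn : n ≠ 0) (hodd : Odd q)
    (K : Type) [Field K] [Fintype K] (hK : Fintype.card K = q ^ 2)
    (E Q : Subgroup Kˣ) (hE : Nat.card E = q + 1) (hQE : Q ≤ E)
    (hQ : Nat.card Q * 2 = q + 1)
    (mu : Kˣ →* ℂˣ) (hmu : ∃ z : Kˣ, mu z ≠ (mu (z ^ q))⁻¹) :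
    ∑ z ∈ Finset.univ.filter (fun z : Kˣ => z ∉ E ∧
        (z * (z ^ q)⁻¹ = 1 ∨ (z * (z ^ q)⁻¹ ∈ E ∧ z * (z ^ q)⁻¹ ∉ Q))),
      ((mu z : ℂˣ) : ℂ)
    = -(1 + ((mu (-1) : ℂˣ) : ℂ)) := by
  classical
  obtain ⟨z0, hz0⟩ := hmu
  have hq1 : 1 ≤ q := by
    rcases hodd with ⟨k, hk⟩; omega
  -- basic power facts
  have hcardU : Fintype.card Kˣ = q ^ 2 - 1 := by
    rw [Fintype.card_units, hK]
  have hpowU : ∀ z : Kˣ, z ^ (q ^ 2 - 1) = 1 := fun z => by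
    rw [← hcardU]; exact pow_card_eq_one
  set t : Kˣ := z0 ^ (q + 1) with htdef
  have ht1 : t ^ (q - 1) = 1 := by
    rw [htdef, ← pow_mul, ← Nat.sq_sub_sq]
    simpa using hpowU z0
  have htq : t ^ q = t := by
    conv_lhs => rw [show q = (q - 1) + 1 by omega]
    rw [pow_succ, ht1, one_mul]
  have htmu : mu t ≠ 1 := by
    intro h
    apply hz0
    rw [eq_inv_iff_mul_eq_one, ← map_mul]
    have hz : z0 * z0 ^ q = t := by rw [htdef, pow_succ']
    rw [hz, h]
  -- E facts
  have hEpow : ∀ z : Kˣ, z ∈ E → z ^ (q + 1) = 1 := by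
    intro z hz
    have h1 : (⟨z, hz⟩ : E) ^ (q + 1) = 1 := by rw [← hE]; exact pow_card_eq_one'
    have := congrArg Subtype.val h1
    simpa using this
  have hwE : ∀ z : Kˣ, z ∈ E → z * (z ^ q)⁻¹ = z * z := by
    intro z hz
    have h1 : z ^ q * z = 1 := by rw [← pow_succ]; exact hEpow z hz
    rw [eq_inv_of_mul_eq_one_left h1, inv_inv]
  -- squares of E lie in Q
  have hsqQ : ∀ z : Kˣ, z ∈ E → z * z ∈ Q := by
    intro z hz
    set Q' := Q.subgroupOf E with hQ'def
    haveI : Q'.Normal := Subgroup.normal_of_comm Q'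
    have hcard' : Nat.card Q' = Nat.card Q :=
      Nat.card_congr (Subgroup.subgroupOfEquivOfLe hQE).toEquiv
    have hQpos : Nat.card Q ≠ 0 := by omega
    have hlag : Nat.card E = Nat.card (E ⧸ Q') * Nat.card Q' :=
      Subgroup.card_eq_card_quotient_mul_card_subgroup Q'
    have hquot : Nat.card (E ⧸ Q') = 2 := by
      rw [hE, hcard'] at hlag
      have : Nat.card (E ⧸ Q') * Nat.card Q = 2 * Nat.card Q := by omega
      exact Nat.eq_of_mul_eq_mul_right (Nat.pos_of_ne_zero hQpos) this
    have hpow2 : ((⟨z, hz⟩ : E) : E ⧸ Q') ^ 2 = 1 := by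
      rw [← hquot]; exact pow_card_eq_one'
    have hmem : ((⟨z, hz⟩ : E) ^ 2) ∈ Q' := by
      rw [← QuotientGroup.eq_one_iff]
      rw [← hpow2]
      rfl
    have := (Subgroup.mem_subgroupOf).1 hmem
    simpa [pow_two] using this
  -- -1 ∈ E
  have hne : (-1 : Kˣ) ≠ 1 := by
    have hchar : ringChar K ≠ 2 := by
      intro h
      have h2 := (FiniteField.even_card_iff_char_two (F := K)).1 h
      rw [hK] at h2
      have : Odd (q ^ 2) := hodd.pow
      rcases this with ⟨k, hk⟩; omega
    intro h
    exact Ring.neg_one_ne_one_of_char_ne_two hchar (by simpa using congrArg Units.val h)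
  have hsq1 : ∀ z : Kˣ, z * z = 1 → z = 1 ∨ z = -1 := by
    intro z h
    have hK1 : (z : K) * (z : K) = 1 := by simpa using congrArg Units.val h
    rcases mul_self_eq_one_iff.1 hK1 with h1 | h1
    · exact Or.inl (Units.ext h1)
    · exact Or.inr (Units.ext (by simpa using h1))
  have hneg1E : (-1 : Kˣ) ∈ E := by
    haveI : Fact (Nat.Prime 2) := ⟨Nat.prime_two⟩
    have h2 : (2 : ℕ) ∣ Fintype.card E := by
      rw [← Nat.card_eq_fintype_card, hE]; rcases hodd with ⟨k, hk⟩
      exact ⟨k + 1, by omega⟩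
    obtain ⟨x, hx⟩ := exists_prime_orderOf_dvd_card 2 h2
    have hx2 : (x : Kˣ) * (x : Kˣ) = 1 := by
      have h1 : x ^ 2 = 1 := by rw [← hx]; exact pow_orderOf_eq_one x
      have := congrArg Subtype.val h1
      simpa [pow_two] using this
    rcases hsq1 _ hx2 with h1 | h1
    · exfalso
      have : x = 1 := Subtype.ext h1
      rw [this, orderOf_one] at hx; omega
    · rw [← h1]; exact x.2
  -- the three pieces
  set A : Finset Kˣ := Finset.univ.filter (fun z : Kˣ => z ∉ E ∧ z ^ q = z) with hAdef
  set B : Finset Kˣ := Finset.univ.filter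
      (fun z : Kˣ => z * (z ^ q)⁻¹ ∈ E ∧ z * (z ^ q)⁻¹ ∉ Q) with hBdef
  set C : Finset Kˣ := Finset.univ.filter (fun z : Kˣ => z ^ q = z ∧ z ∈ E) with hCdef
  have hset : Finset.univ.filter (fun z : Kˣ => z ∉ E ∧
      (z * (z ^ q)⁻¹ = 1 ∨ (z * (z ^ q)⁻¹ ∈ E ∧ z * (z ^ q)⁻¹ ∉ Q))) = A ∪ B := by
    ext z
    simp only [hAdef, hBdef, Finset.mem_filter, Finset.mem_union, Finset.mem_univ, true_and]
    constructor
    · rintro ⟨hzE, h | h⟩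
      · exact Or.inl ⟨hzE, (mul_inv_eq_one.1 h).symm⟩
      · exact Or.inr h
    · rintro (⟨hzE, hzq⟩ | ⟨h1, h2⟩)
      · exact ⟨hzE, Or.inl (by rw [hzq, mul_inv_cancel])⟩
      · refine ⟨fun hzE => h2 ?_, Or.inr ⟨h1, h2⟩⟩
        rw [hwE z hzE]; exact hsqQ z hzE
  have hdisj : Disjoint A B := by
    rw [Finset.disjoint_left]
    intro z hzA hzB
    simp only [hAdef, hBdef, Finset.mem_filter, Finset.mem_univ, true_and] at hzA hzB
    exact hzB.2 (by rw [hzA.2, mul_inv_cancel]; exact Q.one_mem)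
  -- sum over B vanishes
  have hwshift : ∀ z : Kˣ, (t * z) * ((t * z) ^ q)⁻¹ = z * (z ^ q)⁻¹ := by
    intro z
    rw [mul_pow, htq, mul_inv]
    simp [mul_comm, mul_left_comm, mul_assoc]
  have hB0 : ∑ z ∈ B, ((mu z : ℂˣ) : ℂ) = 0 := by
    apply shift_sum mu t htmu
    intro z
    simp only [hBdef, Finset.mem_filter, Finset.mem_univ, true_and, hwshift z]
  -- sum over the fixed field
  have hHinv : ∀ z : Kˣ, z ^ q = z ↔ (t * z) ^ q = t * z := by
    intro z
    rw [mul_pow, htq, mul_right_inj]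
  have hH0 : ∑ z ∈ Finset.univ.filter (fun z : Kˣ => z ^ q = z), ((mu z : ℂˣ) : ℂ) = 0 := by
    apply shift_sum mu t htmu
    intro z
    simp only [Finset.mem_filter, Finset.mem_univ, true_and]
    exact hHinv z
  have hHsplit : Finset.univ.filter (fun z : Kˣ => z ^ q = z) = A ∪ C := by
    ext z
    simp only [hAdef, hCdef, Finset.mem_filter, Finset.mem_union, Finset.mem_univ, true_and]
    tauto
  have hdisj2 : Disjoint A C := by
    rw [Finset.disjoint_left]
    intro z hzA hzC
    simp only [hAdef, hCdef, Finset.mem_filter, Finset.mem_univ, true_and] at hzA hzC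
    exact hzA.1 hzC.2
  have hCval : C = {1, -1} := by
    ext z
    simp only [hCdef, Finset.mem_filter, Finset.mem_univ, true_and, Finset.mem_insert,
      Finset.mem_singleton]
    constructor
    · rintro ⟨h1, h2⟩
      apply hsq1
      have h3 := hEpow z h2
      rwa [pow_succ, h1] at h3
    · rintro (rfl | rfl)
      · exact ⟨one_pow q, E.one_mem⟩
      · exact ⟨Odd.neg_one_pow hodd, hneg1E⟩
  have hCsum : ∑ z ∈ C, ((mu z : ℂˣ) : ℂ) = 1 + ((mu (-1) : ℂˣ) : ℂ) := by
    rw [hCval, Finset.sum_pair (Ne.symm hne)]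
    simp
  have hA : ∑ z ∈ A, ((mu z : ℂˣ) : ℂ) = -(1 + ((mu (-1) : ℂˣ) : ℂ)) := by
    have := hH0
    rw [hHsplit, Finset.sum_union hdisj2, hCsum] at this
    linear_combination this
  rw [hset, Finset.sum_union hdisj, hB0, hA, add_zero]
end

section
/- Let q be a prime power, regard 𝔽_q ⊆ 𝔽_{q²}, and for ε, γ ∈ 𝔽_{q²} \ 𝔽_q let c_{ε,γ} ∈ 𝔽_q and d_{ε,γ} ∈ 𝔽_q^× be the unique elements with γ = c_{ε,γ} + d_{ε,γ}·ε. Let x, y ∈ 𝔽_{q²}^× with β := x⁻¹y ∉ 𝔽_q, and let χ: 𝔽_{q²}^× → ℂ^× be a group homomorphism. Then ∑_{α ∈ 𝔽_{q²}^× \ (𝔽_q^× ∪ β⁻¹𝔽_q^×)} χ(d_{βα, α}) = (q−1)·∑_{t ∈ 𝔽_q^×} χ(t). -/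
open scoped Classical

/-!
Put `β = x⁻¹y`. For `s, t ∈ 𝔽_q` the relation `α = s + t·(βα)` says `α (1 - tβ) = s`, and
`1 - tβ ≠ 0` because `β ∉ 𝔽_q`; so `(t, s) ↦ s / (1 - tβ)` maps `𝔽_q^× × 𝔽_q^×` bijectively onto the
summation range, and the coordinate `d_{βα, α}` of the image of `(t, s)` is `t`. Each value
`χ(t)` is therefore taken `q - 1` times, once for each `s`.
-/

namespace Subfield

variable {K : Type*} [Field K] (L : Subfield K)

theorem eq_and_eq_of_add_mul_eq_add_mul {ε c₁ c₂ d₁ d₂ : K} (hε : ε ∉ L) (hc₁ : c₁ ∈ L)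
    (hc₂ : c₂ ∈ L) (hd₁ : d₁ ∈ L) (hd₂ : d₂ ∈ L) (h : c₁ + d₁ * ε = c₂ + d₂ * ε) :
    c₁ = c₂ ∧ d₁ = d₂ := by
  obtain rfl : d₁ = d₂ := by
    by_contra hne
    have hε_eq : ε = (c₁ - c₂) / (d₂ - d₁) := by
      rw [eq_div_iff (sub_ne_zero.2 (Ne.symm hne))]
      linear_combination -h
    exact hε (hε_eq ▸ L.div_mem (L.sub_mem hc₁ hc₂) (L.sub_mem hd₂ hd₁))
  exact ⟨add_right_cancel h, rfl⟩

theorem one_sub_mul_ne_zero {b t : K} (hb : b ∉ L) (ht : t ∈ L) : 1 - t * b ≠ 0 := by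
  intro h
  have hb_eq : b = t⁻¹ := eq_inv_of_mul_eq_one_right (by linear_combination -h)
  exact hb (hb_eq ▸ L.inv_mem ht)

theorem eq_add_mul_mul_iff_eq_div {α b s t : K} (hb : b ∉ L) (ht : t ∈ L) :
    α = s + t * (b * α) ↔ α = s / (1 - t * b) := by
  rw [eq_div_iff (one_sub_mul_ne_zero L hb ht)]
  constructor <;> intro h <;> linear_combination h

theorem notMem_of_eq_add_mul_mul {α b s t : K} (hb : b ∉ L) (hs : s ∈ L) (ht : t ∈ L)
    (hs₀ : s ≠ 0) (ht₀ : t ≠ 0) (h : α = s + t * (b * α)) : α ∉ L ∧ b * α ∉ L := by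
  have hα : α ∉ L := by
    intro hα
    have hα₀ : α ≠ 0 := by
      rintro rfl
      exact hs₀ (by linear_combination -h)
    have hb_eq : b = (α - s) / (t * α) := by
      rw [eq_div_iff (mul_ne_zero ht₀ hα₀)]
      linear_combination -h
    exact hb (hb_eq ▸ L.div_mem (L.sub_mem hα hs) (L.mul_mem ht hα))
  exact ⟨hα, fun hbα => hα (h ▸ L.add_mem hs (L.mul_mem ht hbα))⟩

end Subfield

open Subfield

variable {F K : Type*} [Field F] [Field K] [Algebra F K]

/-- The unique `α` with `α = s + t·(βα)`, namely `s / (1 - tβ)`, for `(t, s) ∈ F^× × F^×`. -/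
def coordParam {β : K} (hβ : β ∉ Set.range (algebraMap F K)) (p : Fˣ × Fˣ) : Kˣ :=
  Units.mk0 (algebraMap F K p.2 / (1 - algebraMap F K p.1 * β))
    (div_ne_zero (by simp) (one_sub_mul_ne_zero (algebraMap F K).fieldRange hβ ⟨_, rfl⟩))

section coordParam

variable {β : K} (hβ : β ∉ Set.range (algebraMap F K))

theorem coordParam_eq (p : Fˣ × Fˣ) :
    (coordParam hβ p : K) = algebraMap F K p.2 + algebraMap F K p.1 * (β * coordParam hβ p) :=
  (eq_add_mul_mul_iff_eq_div (algebraMap F K).fieldRange hβ ⟨_, rfl⟩).2 rfl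

theorem coordParam_notMem (p : Fˣ × Fˣ) :
    (coordParam hβ p : K) ∉ Set.range (algebraMap F K) ∧
      β * coordParam hβ p ∉ Set.range (algebraMap F K) :=
  notMem_of_eq_add_mul_mul (algebraMap F K).fieldRange hβ ⟨_, rfl⟩ ⟨_, rfl⟩ (by simp)
    (by simp) (coordParam_eq hβ p)

theorem coordParam_injective : Function.Injective (coordParam (F := F) hβ) := by
  intro p p' h
  have h' := coordParam_eq hβ p'
  rw [← h] at h'
  have hcoord := eq_and_eq_of_add_mul_eq_add_mul (algebraMap F K).fieldRange
    (coordParam_notMem hβ p).2 ⟨p.2, rfl⟩ ⟨p'.2, rfl⟩ ⟨p.1, rfl⟩ ⟨p'.1, rfl⟩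
    ((coordParam_eq hβ p).symm.trans h')
  exact Prod.ext (Units.ext ((algebraMap F K).injective hcoord.2))
    (Units.ext ((algebraMap F K).injective hcoord.1))

theorem exists_coordParam_eq {α : Kˣ} {s t : F} (hα : (α : K) ∉ Set.range (algebraMap F K))
    (h : (α : K) = algebraMap F K s + algebraMap F K t * (β * α)) :
    ∃ p : Fˣ × Fˣ, coordParam hβ p = α := by
  have hs₀ : s ≠ 0 := by
    rintro rfl
    rw [map_zero] at h
    refine one_sub_mul_ne_zero (algebraMap F K).fieldRange hβ ⟨t, rfl⟩
      ((mul_eq_zero.1 (?_ : (α : K) * _ = 0)).resolve_left α.ne_zero)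
    linear_combination h
  have ht₀ : t ≠ 0 := by
    rintro rfl
    exact hα ⟨s, by simpa using h.symm⟩
  refine ⟨(Units.mk0 t ht₀, Units.mk0 s hs₀), Units.ext ?_⟩
  exact ((eq_add_mul_mul_iff_eq_div (algebraMap F K).fieldRange hβ ⟨t, rfl⟩).1 h).symm

end coordParam

theorem sum_filter_coord_eq_sum_prod [Fintype F] [Fintype K] {M : Type*} [AddCommMonoid M]
    (c : K → K → K) (d : K → K → Kˣ)
    (hcd : ∀ ε γ : K, ε ∉ Set.range (algebraMap F K) → γ ∉ Set.range (algebraMap F K) →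
      (c ε γ ∈ Set.range (algebraMap F K) ∧
       ((d ε γ : Kˣ) : K) ∈ Set.range (algebraMap F K) ∧
       γ = c ε γ + ((d ε γ : Kˣ) : K) * ε))
    {β : Kˣ} (hβ : (β : K) ∉ Set.range (algebraMap F K)) (f : Kˣ → M) :
    ∑ α ∈ Finset.univ.filter (fun α : Kˣ =>
        (α : K) ∉ Set.range (algebraMap F K) ∧ ((β * α : Kˣ) : K) ∉ Set.range (algebraMap F K)),
      f (d ((β * α : Kˣ) : K) α)
    = ∑ p : Fˣ × Fˣ, f (Units.map (algebraMap F K).toMonoidHom p.1) := by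
  refine (Finset.sum_nbij (coordParam hβ) (fun p _ => ?_)
    (coordParam_injective hβ).injOn (fun α hα => ?_) (fun p _ => ?_)).symm
  · simpa using coordParam_notMem hβ p
  · simp only [Finset.coe_filter, Finset.mem_univ, true_and, Set.mem_ofPred_eq] at hα
    obtain ⟨hα, hβα⟩ := hα
    obtain ⟨⟨s, hs⟩, ⟨t, ht⟩, hα_eq⟩ := hcd _ _ hβα hα
    rw [← hs, ← ht, Units.val_mul] at hα_eq
    simpa using exists_coordParam_eq hβ hα hα_eq
  · obtain ⟨hcR, hdR, hα_eq⟩ := hcd _ _ (coordParam_notMem hβ p).2 (coordParam_notMem hβ p).1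
    have hcoord := eq_and_eq_of_add_mul_eq_add_mul (algebraMap F K).fieldRange
      (coordParam_notMem hβ p).2 ⟨p.2, rfl⟩ hcR ⟨p.1, rfl⟩ hdR
      ((coordParam_eq hβ p).symm.trans hα_eq)
    rw [Units.val_mul]
    exact congrArg f (Units.ext hcoord.2)

theorem stmt_17_general (q : ℕ)
    (F K : Type) [Field F] [Field K] [Fintype F] [Fintype K] [Algebra F K]
    (hF : Fintype.card F = q)
    (c : K → K → K) (d : K → K → Kˣ)
    (hcd : ∀ ε γ : K, ε ∉ Set.range (algebraMap F K) → γ ∉ Set.range (algebraMap F K) →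
      (c ε γ ∈ Set.range (algebraMap F K) ∧
       ((d ε γ : Kˣ) : K) ∈ Set.range (algebraMap F K) ∧
       γ = c ε γ + ((d ε γ : Kˣ) : K) * ε))
    (x y : Kˣ) (hβ : ((x⁻¹ * y : Kˣ) : K) ∉ Set.range (algebraMap F K))
    (χ : Kˣ →* ℂˣ) :
    ∑ α ∈ Finset.univ.filter (fun α : Kˣ =>
        ((α : Kˣ) : K) ∉ Set.range (algebraMap F K) ∧
        ((x⁻¹ * y * α : Kˣ) : K) ∉ Set.range (algebraMap F K)),
      ((χ (d ((x⁻¹ * y * α : Kˣ) : K) ((α : Kˣ) : K)) : ℂˣ) : ℂ)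
    = ((q : ℂ) - 1) *
        ∑ t : Fˣ, ((χ (Units.map (algebraMap F K).toMonoidHom t) : ℂˣ) : ℂ) := by
  have hcard : (Fintype.card Fˣ : ℂ) = q - 1 := by
    rw [Fintype.card_units, Nat.cast_sub Fintype.card_pos, hF, Nat.cast_one]
  rw [sum_filter_coord_eq_sum_prod c d hcd hβ (fun u => (χ u : ℂ)), Fintype.sum_prod_type,
    Finset.mul_sum]
  simp [hcard]

/-- the map `α ↦ d_{βα,α}` sweeps `𝔽_q^×` exactly `q-1` times, so the
corresponding character sum equals `(q-1)·∑_{t ∈ 𝔽_q^×} χ(t)`.  Here, for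
`ε, γ ∈ 𝔽_{q²} \ 𝔽_q`, `c ε γ ∈ 𝔽_q` and `d ε γ ∈ 𝔽_q^×` are the unique elements with
`γ = c ε γ + (d ε γ)·ε`. -/
theorem stmt_17 (q p n : ℕ) (hp : p.Prime) (hq : q = p ^ n) (hn : n ≠ 0)
    (F K : Type) [Field F] [Field K] [Fintype F] [Fintype K] [Algebra F K]
    (hF : Fintype.card F = q) (hK : Fintype.card K = q ^ 2)
    (c : K → K → K) (d : K → K → Kˣ)
    (hcd : ∀ ε γ : K, ε ∉ Set.range (algebraMap F K) → γ ∉ Set.range (algebraMap F K) →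
      (c ε γ ∈ Set.range (algebraMap F K) ∧
       ((d ε γ : Kˣ) : K) ∈ Set.range (algebraMap F K) ∧
       γ = c ε γ + ((d ε γ : Kˣ) : K) * ε))
    (x y : Kˣ) (hβ : ((x⁻¹ * y : Kˣ) : K) ∉ Set.range (algebraMap F K))
    (χ : Kˣ →* ℂˣ) :
    ∑ α ∈ Finset.univ.filter (fun α : Kˣ =>
        ((α : Kˣ) : K) ∉ Set.range (algebraMap F K) ∧
        ((x⁻¹ * y * α : Kˣ) : K) ∉ Set.range (algebraMap F K)),
      ((χ (d ((x⁻¹ * y * α : Kˣ) : K) ((α : Kˣ) : K)) : ℂˣ) : ℂ)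
    = ((q : ℂ) - 1) *
        ∑ t : Fˣ, ((χ (Units.map (algebraMap F K).toMonoidHom t) : ℂˣ) : ℂ) :=
  stmt_17_general q F K hF c d hcd x y hβ χ
end

section
/- Let q be a prime power with q ≡ 3 (mod 4) and let λ: 𝔽_{q²}^× → ℂ^× be a group homomorphism with λ^{q+1} trivial (i.e., λ(x)^{q+1} = 1 for all x ∈ 𝔽_{q²}^×). Then the complex number (q(q+1)/2)·((∑_{x ∈ 𝔽_{q²}^×} λ(x))² − ∑_{x ∈ 𝔽_{q²}^×} λ(x²)) is an integer divisible by 4. -/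
open scoped Classical

lemma sum_char_eq_zero {G : Type*} [Group G] [Fintype G] (χ : G →* ℂˣ) (a : G)
    (ha : χ a ≠ 1) : ∑ x : G, ((χ x : ℂˣ) : ℂ) = 0 := by
  have key : ((χ a : ℂˣ) : ℂ) * ∑ x : G, ((χ x : ℂˣ) : ℂ) = ∑ x : G, ((χ x : ℂˣ) : ℂ) := by
    rw [Finset.mul_sum]
    exact Fintype.sum_equiv (Equiv.mulLeft a) _ _ (fun x => by
      simp [Equiv.mulLeft, map_mul])
  have ha' : ((χ a : ℂˣ) : ℂ) ≠ 1 := fun h => ha (Units.ext h)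
  have h2 : (((χ a : ℂˣ) : ℂ) - 1) * ∑ x : G, ((χ x : ℂˣ) : ℂ) = 0 := by
    linear_combination key
  rcases mul_eq_zero.mp h2 with h | h
  · exact absurd (sub_eq_zero.mp h) ha'
  · exact h

lemma pow_two_apply {G : Type*} [Group G] (χ : G →* ℂˣ) (x : G) : (χ ^ 2) x = χ x ^ 2 := rfl

/-- the eigenvalue `𝓔_λ` is an integer divisible by 4. -/
theorem stmt_19 (q p n : ℕ) (hp : p.Prime) (hq : q = p ^ n) (hn : n ≠ 0) (hq4 : q % 4 = 3)
    (K : Type) [Field K] [Fintype K] (hK : Fintype.card K = q ^ 2)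
    (lam : Kˣ →* ℂˣ) (hlam : ∀ x : Kˣ, lam x ^ (q + 1) = 1) :
    ∃ m : ℤ, ((q : ℂ) * ((q : ℂ) + 1) / 2) *
        ((∑ x : Kˣ, ((lam x : ℂˣ) : ℂ)) ^ 2 - ∑ x : Kˣ, ((lam (x ^ 2) : ℂˣ) : ℂ)) = (m : ℂ)
      ∧ (4 ∣ m) := by
  set k := q / 4 with hkdef
  have hk : q = 4 * k + 3 := by omega
  have hqC : (q : ℂ) = 4 * (k : ℂ) + 3 := by rw [hk]; push_cast; ring
  have hcard : (Fintype.card Kˣ : ℂ) = (q : ℂ) ^ 2 - 1 := by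
    rw [Fintype.card_units, hK]
    have h1 : 1 ≤ q ^ 2 := by nlinarith [hk]
    push_cast [Nat.cast_sub h1]; ring
  have hT2 : ∀ x : Kˣ, ((lam (x ^ 2) : ℂˣ) : ℂ) = ((lam x : ℂˣ) : ℂ) ^ 2 := by
    intro x; rw [map_pow]; push_cast; ring
  by_cases h1 : ∀ x : Kˣ, lam x = 1
  · -- trivial character
    have hS : ∑ x : Kˣ, ((lam x : ℂˣ) : ℂ) = (q : ℂ) ^ 2 - 1 := by
      rw [← hcard]; simp [h1]
    have hT : ∑ x : Kˣ, ((lam (x ^ 2) : ℂˣ) : ℂ) = (q : ℂ) ^ 2 - 1 := by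
      rw [← hcard]; simp [hT2, h1]
    refine ⟨(4*k+3) * (2*k+2) * (((4*k+3)^2-1)^2 - ((4*k+3)^2-1)), ?_, ?_⟩
    · rw [hS, hT, hqC]; push_cast; ring
    · exact ⟨(4*(k:ℤ)+3)*2*(k+1)*(4*k^2+6*k+2)*(16*k^2+24*k+7), by ring⟩
  · push_neg at h1
    obtain ⟨a, ha⟩ := h1
    have hS : ∑ x : Kˣ, ((lam x : ℂˣ) : ℂ) = 0 := sum_char_eq_zero lam a ha
    by_cases h2 : ∀ x : Kˣ, lam x ^ 2 = 1
    · have hone : ∀ x : Kˣ, ((lam x : ℂˣ) : ℂ) ^ 2 = 1 := fun x => by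
        rw [← Units.val_pow_eq_pow_val, h2 x, Units.val_one]
      have hT : ∑ x : Kˣ, ((lam (x ^ 2) : ℂˣ) : ℂ) = (q : ℂ) ^ 2 - 1 := by
        rw [← hcard]; simp [hT2, hone]
      refine ⟨-((4*k+3) * (2*k+2) * ((4*k+3)^2-1)), ?_, ?_⟩
      · rw [hS, hT, hqC]; push_cast; ring
      · exact ⟨-((4*(k:ℤ)+3)*(2*k+2)*(4*k^2+6*k+2)), by ring⟩
    · push_neg at h2
      obtain ⟨b, hb⟩ := h2
      have hT : ∑ x : Kˣ, ((lam (x ^ 2) : ℂˣ) : ℂ) = 0 := by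
        have heq : ∑ x : Kˣ, ((lam (x ^ 2) : ℂˣ) : ℂ) = ∑ x : Kˣ, (((lam ^ 2) x : ℂˣ) : ℂ) := by
          refine Fintype.sum_congr _ _ (fun x => ?_)
          rw [hT2, pow_two_apply, Units.val_pow_eq_pow_val]
        rw [heq]
        exact sum_char_eq_zero (lam ^ 2) b (by simpa [pow_two_apply] using hb)
      exact ⟨0, by rw [hS, hT]; push_cast; ring, ⟨0, by ring⟩⟩
end
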